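/- arXiv:1704.01537 — 7 statements merged into one kernel-verified Lean document; each statement's English description precedes it below -/
import Mathlib

section
/- Suppose λ is an infinite cardinal, B is a complete Boolean algebra with the λ-chain condition (every antichain of B has cardinality less than λ), and U is an ℵ₁-incomplete ultrafilter on B. Then U is not λ-OK; that is, there exists a decreasing sequence (a_n : n < ω) of elements of U with a_0 = ⊤ such that there is no multiplicative distribution (b_s : s a finite subset of λ) with every b_s ∈ U and b_s ≤ a_{|s|}. -/
/-!
Suppose `b` is a multiplicative distribution with `b s ≤ a |s|`, where `a` decreases to `⊥`.
The differences `c n` of the sequence `a` are pairwise disjoint with supremum `⊤`, so every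
`b {α}` meets some `c n`. Any `n + 1` distinct elements `b {α} ⊓ c n` have meet below
`a n ⊓ c n = ⊥`, and among `κ ≥ ℵ₀` nonzero elements whose `k`-fold meets vanish one finds `κ`
finite meets that form an antichain. The antichains obtained for the various `n` lie below the
disjoint `c n`, so their union `W` is an antichain with `λ ≤ max ℵ₀ |W|`. The nonzero `c n`
form an infinite antichain, so the `λ`-c.c. gives `ℵ₀ < λ` as well as `|W| < λ`.
-/

open Cardinal

/-- `U` is an ultrafilter on the Boolean algebra `B`: `⊥ ∉ U`, upward closed, closed under
binary meets, and for every `a` either `a ∈ U` or `aᶜ ∈ U`. -/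
def IsUltrafilterOn {B : Type*} [BooleanAlgebra B] (U : Set B) : Prop :=
  ⊥ ∉ U ∧ (∀ a ∈ U, ∀ b : B, a ≤ b → b ∈ U) ∧ (∀ a ∈ U, ∀ b ∈ U, a ⊓ b ∈ U) ∧
    ∀ a : B, a ∈ U ∨ aᶜ ∈ U

/-- `b` is a multiplicative distribution on `B` indexed by finite subsets of `Λ`:
all values nonzero, `b ∅ = ⊤`, antitone with respect to inclusion, and multiplicative. -/
def IsMultDistribution {B : Type*} [BooleanAlgebra B] {Λ : Type*} (b : Finset Λ → B) : Prop :=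
  (∀ s : Finset Λ, b s ≠ ⊥) ∧ b ∅ = ⊤ ∧ (∀ s t : Finset Λ, s ⊆ t → b t ≤ b s) ∧
    ∀ s : Finset Λ, b s = s.inf fun α => b {α}

/-- There is a multiplicative distribution indexed by finite subsets of `Λ`, lying in `U`,
refining the sequence `a` in the sense that `b s ≤ a |s|`. -/
def HasMultRefinement {B : Type*} [BooleanAlgebra B] (Λ : Type*) (U : Set B) (a : ℕ → B) : Prop :=
  ∃ b : Finset Λ → B, IsMultDistribution b ∧ (∀ s : Finset Λ, b s ∈ U) ∧
    ∀ s : Finset Λ, b s ≤ a s.card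

/-- An antichain in a Boolean algebra: a set of pairwise disjoint nonzero elements. -/
def IsBAAntichain {B : Type*} [BooleanAlgebra B] (A : Set B) : Prop :=
  ⊥ ∉ A ∧ A.Pairwise fun c d => c ⊓ d = ⊥

universe u

open Set Function

theorem Cardinal.mk_biUnion_lt_of_finite {ι α : Type u} {κ : Cardinal.{u}} (hκ : ℵ₀ ≤ κ)
    {s : Set ι} (hs : #s < κ) {f : ι → Set α} (hf : ∀ i ∈ s, (f i).Finite) :
    #(⋃ i ∈ s, f i) < κ := by
  rcases s.finite_or_infinite with hfin | hinf
  · exact (hfin.biUnion hf).lt_aleph0.trans_le hκ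
  · calc #(⋃ i ∈ s, f i) ≤ #s * ℵ₀ :=
          (mk_biUnion_le f s).trans (by gcongr; exact ciSup_le' fun i => (hf i.1 i.2).lt_aleph0.le)
      _ = #s := have := hinf.to_subtype; mul_aleph0_eq (aleph0_le_mk s)
      _ < κ := hs

theorem Cardinal.mk_iUnion_nat_le_of_le {α : Type u} {μ : Cardinal.{u}} (hμ : ℵ₀ ≤ μ)
    (S : ℕ → Set α) (hS : ∀ n, #(S n) ≤ μ) : #(⋃ n, S n) ≤ μ := by
  have := mk_iUnion_le_lift.{u, 0} S
  simp only [lift_uzero, mk_nat, lift_aleph0] at this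
  calc #(⋃ n, S n) ≤ ℵ₀ * ⨆ n, #(S n) := this
    _ ≤ ℵ₀ * μ := by gcongr; exact ciSup_le' hS
    _ = μ := aleph0_mul_eq hμ

section Antichain

variable {B : Type*} [BooleanAlgebra B]

theorem isBAAntichain_image_of_pairwise_disjoint {ι : Type*} {f : ι → B} {s : Set ι}
    (hne : ∀ i ∈ s, f i ≠ ⊥) (hdisj : s.Pairwise (Disjoint on f)) :
    IsBAAntichain (f '' s) ∧ InjOn f s := by
  have hinj : InjOn f s := fun i hi j hj hij => by
    by_contra hne'
    have hii := hdisj hi hj hne'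
    rw [onFun, hij, disjoint_self] at hii
    exact hne j hj hii
  refine ⟨⟨fun ⟨i, hi, hfi⟩ => hne i hi hfi, ?_⟩, hinj⟩
  rintro _ ⟨i, hi, rfl⟩ _ ⟨j, hj, rfl⟩ hij
  exact disjoint_iff.mp (hdisj hi hj fun h => hij (h ▸ rfl))

theorem IsBAAntichain.iUnion {ι : Type*} {A : ι → Set B} {c : ι → B}
    (hc : Pairwise (Disjoint on c)) (hA : ∀ i, IsBAAntichain (A i))
    (hAc : ∀ i, ∀ y ∈ A i, y ≤ c i) : IsBAAntichain (⋃ i, A i) := by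
  refine ⟨fun h => ?_, ?_⟩
  · obtain ⟨i, hi⟩ := mem_iUnion.mp h
    exact (hA i).1 hi
  · intro y hy z hz hyz
    obtain ⟨i, hi⟩ := mem_iUnion.mp hy
    obtain ⟨j, hj⟩ := mem_iUnion.mp hz
    rcases eq_or_ne i j with rfl | hij
    · exact (hA i).2 hi hj hyz
    · exact disjoint_iff.mp ((hc hij).mono (hAc i y hi) (hAc j z hj))

end Antichain

theorem exists_isBAAntichain_of_finset_inf_eq_bot {B Λ : Type u} [BooleanAlgebra B] (x : Λ → B)
    (k : ℕ) (hk : ∀ s : Finset Λ, k ≤ s.card → s.inf x = ⊥) (hx : ℵ₀ ≤ #{α | x α ≠ ⊥}) :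
    ∃ A : Set B, IsBAAntichain A ∧ (∀ y ∈ A, ∃ α, y ≤ x α) ∧ #{α | x α ≠ ⊥} ≤ #A := by
  classical
  set κ := #{α | x α ≠ ⊥}
  let H : ℕ → Set (Finset Λ) := fun j => {s | j ≤ s.card ∧ s.inf x ≠ ⊥}
  have hH_one : κ ≤ #(H 1) := by
    refine (mk_image_eq (s := {α | x α ≠ ⊥}) Finset.singleton_injective).ge.trans
      (mk_le_mk_of_subset ?_)
    rintro _ ⟨α, hα, rfl⟩
    exact ⟨by simp, by simpa using hα⟩
  have hH_large : #(H (k + 1)) < κ := by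
    have : H (k + 1) = ∅ :=
      eq_empty_iff_forall_notMem.mpr fun s hs => hs.2 (hk s (by have := hs.1; omega))
    simpa [this] using aleph0_pos.trans_le hx
  -- `m + 1` is the last level at which `κ` many sets have nonzero meet. Fewer than `κ` sets of
  -- that level lie inside a larger set with nonzero meet; any two of the others have a union of
  -- larger size, so their meets are disjoint.
  obtain ⟨m, hm, hm_succ⟩ := Nat.exists_not_and_succ_of_not_zero_of_exists
    (p := fun j => #(H (j + 1)) < κ) (not_lt.mpr hH_one) ⟨k, hH_large⟩
  rw [not_lt] at hm
  set E := ⋃ u ∈ H (m + 2), (u.powerset : Set (Finset Λ))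
  have hE : #E < κ := mk_biUnion_lt_of_finite hx hm_succ fun u _ => u.powerset.finite_toSet
  have hD : κ ≤ #↥(H (m + 1) \ E) := by
    by_contra! h
    exact ((le_mk_sdiff_add_mk (H (m + 1)) E).trans_lt (add_lt_of_lt hx h hE)).not_ge hm
  have hdisj : (H (m + 1) \ E).Pairwise (Disjoint on fun s => s.inf x) := by
    intro s hs t ht hst
    by_contra hmeet
    rw [onFun, disjoint_iff, ← Finset.inf_union] at hmeet
    have hcard : m + 2 ≤ (s ∪ t).card := by
      by_contra! hlt
      have hs' : s = s ∪ t :=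
        Finset.eq_of_subset_of_card_le Finset.subset_union_left (by have := hs.1.1; omega)
      have ht' : t = s ∪ t :=
        Finset.eq_of_subset_of_card_le Finset.subset_union_right (by have := ht.1.1; omega)
      exact hst (hs'.trans ht'.symm)
    exact hs.2 (mem_biUnion (x := s ∪ t) ⟨hcard, hmeet⟩
      (Finset.mem_coe.mpr (Finset.mem_powerset.mpr Finset.subset_union_left)))
  obtain ⟨hA, hinj⟩ := isBAAntichain_image_of_pairwise_disjoint (fun s hs => hs.1.2) hdisj
  refine ⟨_, hA, ?_, hD.trans (mk_image_eq_of_injOn _ _ hinj).ge⟩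
  rintro _ ⟨s, hs, rfl⟩
  obtain ⟨α, hα⟩ : s.Nonempty := Finset.card_pos.mp (by have := hs.1.1; omega)
  exact ⟨α, Finset.inf_le hα⟩

theorem exists_isBAAntichain_mk_le_max_of_finset_inf_eq_bot {B Λ : Type u} [BooleanAlgebra B]
    (x : Λ → B) (k : ℕ) (hk : ∀ s : Finset Λ, k ≤ s.card → s.inf x = ⊥) :
    ∃ A : Set B, IsBAAntichain A ∧ (∀ y ∈ A, ∃ α, y ≤ x α) ∧ #{α | x α ≠ ⊥} ≤ max ℵ₀ #A := by
  rcases le_or_gt ℵ₀ #{α | x α ≠ ⊥} with hx | hx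
  · obtain ⟨A, hA, hAx, hcard⟩ := exists_isBAAntichain_of_finset_inf_eq_bot x k hk hx
    exact ⟨A, hA, hAx, hcard.trans (le_max_right _ _)⟩
  · exact ⟨∅, ⟨notMem_empty _, pairwise_empty _⟩, by simp, hx.le.trans (le_max_left _ _)⟩

theorem exists_infinite_isBAAntichain_of_iInf_eq_bot {B : Type*} [CompleteBooleanAlgebra B]
    {a : ℕ → B} (ha : Antitone a) (ha_ne : ∀ n, a n ≠ ⊥) (ha_inf : ⨅ n, a n = ⊥) :
    ∃ A : Set B, IsBAAntichain A ∧ A.Infinite := by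
  set c := disjointed fun n => (a n)ᶜ
  have hc : {n | c n ≠ ⊥}.Infinite := by
    intro hfin
    obtain ⟨M, hM⟩ := hfin.bddAbove
    refine ha_ne M (compl_eq_top.mp (top_le_iff.mp ?_))
    calc ⊤ = ⨆ n, (a n)ᶜ := by rw [← compl_iInf, ha_inf, compl_bot]
      _ = ⨆ n, c n := (iSup_disjointed _).symm
      _ ≤ (a M)ᶜ := iSup_le fun n => ?_
    by_cases hn : n ≤ M
    · exact (disjointed_le _ n).trans (compl_le_compl (ha hn))
    · rw [show c n = ⊥ from not_not.mp fun h => hn (hM h)]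
      exact bot_le
  obtain ⟨hA, hinj⟩ := isBAAntichain_image_of_pairwise_disjoint (fun n hn => hn)
    ((disjoint_disjointed _).set_pairwise {n | c n ≠ ⊥})
  exact ⟨_, hA, hc.image hinj⟩

theorem exists_isBAAntichain_mk_le_max_of_finset_inf_le {B Λ : Type u} [CompleteBooleanAlgebra B]
    {a : ℕ → B} (ha : Antitone a) (ha_inf : ⨅ n, a n = ⊥) {x : Λ → B} (hx : ∀ α, x α ≠ ⊥)
    (hxa : ∀ s : Finset Λ, s.inf x ≤ a s.card) :
    ∃ A : Set B, IsBAAntichain A ∧ #Λ ≤ max ℵ₀ #A := by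
  set c := disjointed fun n => (a n)ᶜ
  have hc_sup : ⨆ n, c n = ⊤ := by rw [iSup_disjointed, ← compl_iInf, ha_inf, compl_bot]
  have hslice : ∀ n (s : Finset Λ), n + 1 ≤ s.card → s.inf (fun α => x α ⊓ c n) = ⊥ := by
    intro n s hs
    obtain ⟨α, hα⟩ : s.Nonempty := Finset.card_pos.mp (by omega)
    refine le_bot_iff.mp ?_
    calc s.inf (fun α => x α ⊓ c n)
        ≤ s.inf x ⊓ c n :=
          le_inf (Finset.inf_mono_fun fun β _ => inf_le_left) ((Finset.inf_le hα).trans inf_le_right)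
      _ ≤ a n ⊓ (a n)ᶜ := inf_le_inf ((hxa s).trans (ha (by omega))) (disjointed_le _ n)
      _ = ⊥ := inf_compl_eq_bot
  choose A hA hAx hSA using fun n =>
    exists_isBAAntichain_mk_le_max_of_finset_inf_eq_bot _ (n + 1) (hslice n)
  have hcover : ∀ α, ∃ n, x α ⊓ c n ≠ ⊥ := by
    intro α
    by_contra! h
    apply hx α
    rw [← inf_top_eq (x α), ← hc_sup, inf_iSup_eq]
    simp [h]
  refine ⟨⋃ n, A n, IsBAAntichain.iUnion (c := c) (disjoint_disjointed _) hA fun n y hy => ?_, ?_⟩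
  · obtain ⟨α, hα⟩ := hAx n y hy
    exact hα.trans inf_le_right
  · rw [← mk_univ, ← iUnion_eq_univ_iff.mpr hcover]
    exact mk_iUnion_nat_le_of_le (le_max_left _ _) _ fun n =>
      (hSA n).trans (max_le_max le_rfl (mk_le_mk_of_subset (subset_iUnion A n)))

theorem stmt0_general {B : Type u} [CompleteBooleanAlgebra B] (lam : Cardinal.{u})
    (hcc : ∀ A : Set B, IsBAAntichain A → #A < lam)
    (U : Set B) (hU : IsUltrafilterOn U)
    (hinc : ∃ a : ℕ → B, (∀ n, a n ∈ U) ∧ Antitone a ∧ (⨅ n, a n) = ⊥) :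
    ∃ a : ℕ → B, (∀ n, a n ∈ U) ∧ Antitone a ∧ a 0 = ⊤ ∧
      ¬ HasMultRefinement lam.ord.ToType U a := by
  obtain ⟨a, haU, ha, ha_inf⟩ := hinc
  -- `a' = (⊤, a 0, a 1, …)`
  set a' : ℕ → B := fun n => ⨅ i < n, a i
  have ha' : Antitone a' := fun m n hmn => biInf_mono fun i hi => lt_of_lt_of_le hi hmn
  have ha'_inf : ⨅ n, a' n = ⊥ :=
    le_bot_iff.mp (ha_inf ▸ le_iInf fun n => iInf_le_of_le (n + 1) (iInf₂_le n n.lt_succ_self))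
  refine ⟨a', fun n => hU.2.1 _ (haU n) _ (le_iInf₂ fun i hi => ha hi.le), ha', by simp [a'], ?_⟩
  rintro ⟨b, ⟨hb_ne, -, -, hb_mul⟩, -, hba⟩
  obtain ⟨A, hA, hΛA⟩ := exists_isBAAntichain_mk_le_max_of_finset_inf_le ha' ha'_inf
    (x := fun α => b {α}) (fun α => hb_ne _) fun s => hb_mul s ▸ hba s
  obtain ⟨C, hC, hC_inf⟩ :=
    exists_infinite_isBAAntichain_of_iInf_eq_bot ha (fun n h => hU.1 (h ▸ haU n)) ha_inf
  have hlam : lam ≤ max ℵ₀ #A := mk_ord_toType lam ▸ hΛA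
  exact hlam.not_gt (max_lt ((infinite_iff.mp hC_inf.to_subtype).trans_lt (hcc C hC)) (hcc A hA))

/-- if `B` is a complete Boolean algebra with the `λ`-c.c. and `U` is an
`ℵ₁`-incomplete ultrafilter on `B`, then `U` is not `λ`-OK: there is a decreasing sequence
`(a_n)` from `U` with `a 0 = ⊤` admitting no multiplicative refinement in `U` indexed by
the finite subsets of `λ`. -/
theorem stmt0 {B : Type u} [CompleteBooleanAlgebra B] (lam : Cardinal.{u}) (hlam : ℵ₀ ≤ lam)
    (hcc : ∀ A : Set B, IsBAAntichain A → #A < lam)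
    (U : Set B) (hU : IsUltrafilterOn U)
    (hinc : ∃ a : ℕ → B, (∀ n, a n ∈ U) ∧ Antitone a ∧ (⨅ n, a n) = ⊥) :
    ∃ a : ℕ → B, (∀ n, a n ∈ U) ∧ Antitone a ∧ a 0 = ⊤ ∧
      ¬ HasMultRefinement lam.ord.ToType U a :=
  stmt0_general lam hcc U hU hinc
end

section
/- Let B be a complete Boolean algebra, Λ an index set, (a_n : n < ω) a decreasing sequence in B with a_0 = ⊤ and ⨅_n a_n = ⊥, and (b_s : s a finite subset of Λ) a multiplicative distribution on B such that b_s ≤ a_{|s|} for every finite s ⊆ Λ. Then for every nonzero c ∈ B there is a nonzero c' ≤ c such that c' decides b_{{α}} for every α ∈ Λ; that is, for every α ∈ Λ, either c' ≤ b_{{α}} or c' ⊓ b_{{α}} = ⊥. -/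
/-- given a decreasing sequence `(a_n)` with `a 0 = ⊤` and `⨅ a_n = ⊥` and a
multiplicative distribution `(b_s)` with `b s ≤ a |s|`, every nonzero `c` has a nonzero
`c' ≤ c` deciding every `b {α}`. -/
theorem stmt1 {B : Type*} [CompleteBooleanAlgebra B] {Λ : Type*}
    (a : ℕ → B) (ha0 : a 0 = ⊤) (hmono : Antitone a) (hainf : (⨅ n, a n) = ⊥)
    (b : Finset Λ → B) (hb : IsMultDistribution b)
    (hle : ∀ s : Finset Λ, b s ≤ a s.card)
    (c : B) (hc : c ≠ ⊥) :
    ∃ c' : B, c' ≤ c ∧ c' ≠ ⊥ ∧ ∀ α : Λ, c' ≤ b {α} ∨ c' ⊓ b {α} = ⊥ := by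
  classical
  obtain ⟨hbne, hb0, hbanti, hbmul⟩ := hb
  have h1 : (⨆ n, (a n)ᶜ) = ⊤ := by rw [← compl_iInf, hainf, compl_bot]
  have h2 : c = ⨆ n, c ⊓ (a n)ᶜ := by rw [← inf_iSup_eq, h1, inf_top_eq]
  have h3 : ∃ n, c ⊓ (a n)ᶜ ≠ ⊥ := by
    by_contra h
    push_neg at h
    apply hc
    rw [h2]
    simp [h]
  obtain ⟨n, hn⟩ := h3
  set c₀ := c ⊓ (a n)ᶜ with hc₀
  have hbound : ∀ s : Finset Λ, c₀ ⊓ b s ≠ ⊥ → s.card < n := by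
    intro s hs
    by_contra h
    push_neg at h
    apply hs
    have h4 : b s ≤ a n := (hle s).trans (hmono h)
    have h5 : c₀ ⊓ b s ≤ (a n)ᶜ ⊓ a n := inf_le_inf inf_le_right h4
    have h6 : c₀ ⊓ b s ≤ (⊥ : B) := h5.trans (by simp)
    exact le_bot_iff.mp h6
  let P : ℕ → Prop := fun k => ∃ s : Finset Λ, s.card = k ∧ c₀ ⊓ b s ≠ ⊥
  have hP0 : P 0 := ⟨∅, rfl, by simpa [hb0] using hn⟩
  have hPbd : ∀ k, P k → k < n := by
    rintro k ⟨s, hsc, hs⟩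
    exact hsc ▸ hbound s hs
  set k := Nat.findGreatest P n with hk
  have hPk : P k := Nat.findGreatest_spec (Nat.le_of_lt (hPbd 0 hP0)) hP0
  have hnotP : ¬ P (k + 1) := fun hp =>
    Nat.findGreatest_is_greatest (Nat.lt_succ_self k) (Nat.le_of_lt (hPbd _ hp)) hp
  obtain ⟨s, hsc, hs⟩ := hPk
  refine ⟨c₀ ⊓ b s, le_trans inf_le_left inf_le_left, hs, fun α => ?_⟩
  by_cases hα : α ∈ s
  · left
    refine le_trans inf_le_right (hbanti {α} s ?_)
    simpa using hα
  · right
    have hins : b (insert α s) = b {α} ⊓ b s := by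
      rw [hbmul (insert α s), Finset.inf_insert, ← hbmul s]
    have hcard : (insert α s).card = k + 1 := by
      rw [Finset.card_insert_of_notMem hα, hsc]
    have : c₀ ⊓ b (insert α s) = ⊥ := by
      by_contra h
      exact hnotP ⟨insert α s, hcard, h⟩
    rw [hins] at this
    calc c₀ ⊓ b s ⊓ b {α} = c₀ ⊓ (b {α} ⊓ b s) := by ac_rfl
    _ = ⊥ := this
end

section
/- Let B be a complete Boolean algebra, Λ an infinite index set, (a_n : n < ω) a decreasing sequence in B with a_0 = ⊤ and ⨅_n a_n = ⊥, and (b_s : s a finite subset of Λ) a multiplicative distribution on B such that b_s ≤ a_{|s|} for every finite s ⊆ Λ. Then B contains an antichain of cardinality at least |Λ|. -/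
open Cardinal

open Set

/-!
Since `⨅ n, a n = ⊥`, each `b {α}` meets some `(a n)ᶜ`; put `c α := b {α} ⊓ (a (n α))ᶜ`.
A finite `T ∋ α` with `⨅_{β ∈ T} c β ≠ ⊥` has fewer than `n α` elements, because
`b T ≤ a (n α)` as soon as `|T| ≥ n α`. So each `α` lies in a largest such `T`, say `C α`, and by
maximality two of these meet only if they coincide. The meets `⨅_{β ∈ C α} c β` therefore form an
antichain, and as `α ∈ C α` the map `α ↦ C α` has finite fibres, so the antichain has size `|Λ|`.
-/

section Meets

variable {X ι : Type*} [SemilatticeInf X] [BoundedOrder X]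

theorem exists_mem_inf_ne_bot_card_max (c : ι → X) {i : ι} (hi : c i ≠ ⊥) {N : ℕ}
    (hN : ∀ T : Finset ι, i ∈ T → T.inf c ≠ ⊥ → T.card ≤ N) :
    ∃ C : Finset ι, i ∈ C ∧ C.inf c ≠ ⊥ ∧
      ∀ T : Finset ι, i ∈ T → T.inf c ≠ ⊥ → T.card ≤ C.card := by
  classical
  set S : Set ℕ := {k | ∃ C : Finset ι, (i ∈ C ∧ C.inf c ≠ ⊥) ∧ C.card = k}
  have hS : S.Nonempty := ⟨1, {i}, ⟨Finset.mem_singleton_self i, by simpa using hi⟩, rfl⟩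
  have hSbdd : BddAbove S := ⟨N, by rintro _ ⟨C, ⟨hiC, hC⟩, rfl⟩; exact hN C hiC hC⟩
  obtain ⟨C, ⟨hiC, hC⟩, hcard⟩ := Nat.sSup_mem hS hSbdd
  exact ⟨C, hiC, hC, fun T hiT hT => hcard ▸ le_csSup hSbdd ⟨T, ⟨hiT, hT⟩, rfl⟩⟩

theorem exists_pairwiseDisjoint_of_locally_bounded_meets (c : ι → X) (hc : ∀ i, c i ≠ ⊥)
    (hbdd : ∀ i, ∃ N : ℕ, ∀ T : Finset ι, i ∈ T → T.inf c ≠ ⊥ → T.card ≤ N) :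
    ∃ F : ι → X, (∀ i, F i ≠ ⊥) ∧ (range F).PairwiseDisjoint id ∧
      ∀ x, (F ⁻¹' {x}).Finite := by
  classical
  choose N hN using hbdd
  choose C hiC hC hmax using fun i => exists_mem_inf_ne_bot_card_max c (hc i) (hN i)
  have hC_eq : ∀ i j, (C i).inf c ⊓ (C j).inf c ≠ ⊥ → C i = C j := by
    intro i j hij
    have hU : (C i ∪ C j).inf c ≠ ⊥ := by rwa [Finset.inf_union]
    have hi : C i = C i ∪ C j := Finset.eq_of_subset_of_card_le Finset.subset_union_left
      (hmax i _ (Finset.mem_union_left _ (hiC i)) hU)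
    have hj : C j = C i ∪ C j := Finset.eq_of_subset_of_card_le Finset.subset_union_right
      (hmax j _ (Finset.mem_union_right _ (hiC j)) hU)
    exact hi.trans hj.symm
  refine ⟨fun i => (C i).inf c, hC, ?_, fun x => ?_⟩
  · rintro _ ⟨i, rfl⟩ _ ⟨j, rfl⟩ hne
    by_contra h
    exact hne (congrArg (·.inf c) (hC_eq i j fun hij => h (disjoint_iff.2 hij)))
  · rcases eq_empty_or_nonempty ((fun i => (C i).inf c) ⁻¹' {x}) with h | ⟨i, rfl⟩
    · exact h ▸ finite_empty
    refine (C i).finite_toSet.subset fun j (hj : (C j).inf c = (C i).inf c) => ?_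
    have : C j = C i := hC_eq j i (by rw [hj, inf_idem]; exact hC i)
    exact this ▸ hiC j

end Meets

theorem Cardinal.lift_mk_le_lift_mk_range_of_finite_fibers {ι : Type u} {β : Type v} [Infinite ι]
    (f : ι → β) (hf : ∀ y, (f ⁻¹' {y}).Finite) : lift.{v} #ι ≤ lift.{u} #(range f) := by
  have hrange : Infinite (range f) := by
    refine infinite_coe_iff.2 fun hfin => infinite_univ (α := ι) ?_
    exact Finite.of_finite_fibers f (by simpa [image_univ] using hfin)
      fun y _ => (hf y).subset inter_subset_right
  calc lift.{v} #ι ≤ lift.{u} #(range f) * ℵ₀ := by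
        refine lift_mk_le_lift_mk_mul_of_lift_mk_preimage_le (rangeFactorization f) fun y => ?_
        have hy : (rangeFactorization f ⁻¹' {y}).Finite :=
          (hf y).subset fun _ hx => congrArg Subtype.val hx
        exact lift_le_aleph0.2 hy.countable.le_aleph0
    _ = lift.{u} #(range f) := mul_aleph0_eq (aleph0_le_lift.2 (aleph0_le_mk _))

theorem IsBAAntichain.of_pairwiseDisjoint {B : Type*} [BooleanAlgebra B] {A : Set B}
    (h0 : ⊥ ∉ A) (hA : A.PairwiseDisjoint id) : IsBAAntichain A :=
  ⟨h0, fun _ hx _ hy hxy => (hA hx hy hxy).eq_bot⟩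

theorem exists_inf_compl_ne_bot_of_iInf_eq_bot {B ι : Type*} [CompleteBooleanAlgebra B]
    {a : ι → B} (ha : ⨅ n, a n = ⊥) {x : B} (hx : x ≠ ⊥) : ∃ n, x ⊓ (a n)ᶜ ≠ ⊥ := by
  by_contra! h
  exact hx (eq_bot_iff.2 (ha ▸ le_iInf fun n => disjoint_compl_right_iff.1 (disjoint_iff.2 (h n))))

theorem IsMultDistribution.inf_compl_eq_bot {B Λ : Type*} [BooleanAlgebra B] {a : ℕ → B}
    {b : Finset Λ → B} (hb : IsMultDistribution b) (hle : ∀ s : Finset Λ, b s ≤ a s.card)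
    {T : Finset Λ} {N : ℕ} (hN : N ≤ T.card) : b T ⊓ (a N)ᶜ = ⊥ := by
  obtain ⟨S, hST, rfl⟩ := Finset.exists_subset_card_eq hN
  exact disjoint_iff.1 (disjoint_compl_right_iff.2 ((hb.2.2.1 S T hST).trans (hle S)))

theorem stmt2_general {B : Type u} [CompleteBooleanAlgebra B] {Λ : Type v} [Infinite Λ]
    (a : ℕ → B) (hainf : (⨅ n, a n) = ⊥)
    (b : Finset Λ → B) (hb : IsMultDistribution b)
    (hle : ∀ s : Finset Λ, b s ≤ a s.card) :
    ∃ A : Set B, IsBAAntichain A ∧ Cardinal.lift.{u} #Λ ≤ Cardinal.lift.{v} #A := by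
  choose n hn using fun α => exists_inf_compl_ne_bot_of_iInf_eq_bot hainf (hb.1 {α})
  have hbdd : ∀ α, ∃ N : ℕ, ∀ T : Finset Λ, α ∈ T →
      (T.inf fun β => b {β} ⊓ (a (n β))ᶜ) ≠ ⊥ → T.card ≤ N := by
    refine fun α => ⟨n α, fun T hαT hT => ?_⟩
    by_contra! hlt
    refine hT (eq_bot_iff.2 ?_)
    calc (T.inf fun β => b {β} ⊓ (a (n β))ᶜ) ≤ b T ⊓ (a (n α))ᶜ := by
          refine le_inf ?_ ((Finset.inf_le hαT).trans inf_le_right)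
          rw [hb.2.2.2 T]
          exact Finset.inf_mono_fun fun β _ => inf_le_left
      _ = ⊥ := hb.inf_compl_eq_bot hle hlt.le
  obtain ⟨F, hF0, hFdisj, hFfin⟩ := exists_pairwiseDisjoint_of_locally_bounded_meets _ hn hbdd
  exact ⟨range F, .of_pairwiseDisjoint (fun ⟨i, hi⟩ => hF0 i hi) hFdisj,
    lift_mk_le_lift_mk_range_of_finite_fibers F hFfin⟩

/-- given a decreasing sequence `(a_n)` with `a 0 = ⊤` and `⨅ a_n = ⊥` and a
multiplicative distribution `(b_s)` indexed by finite subsets of an infinite `Λ` with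
`b s ≤ a |s|`, the algebra `B` contains an antichain of cardinality at least `|Λ|`. -/
theorem stmt2 {B : Type u} [CompleteBooleanAlgebra B] {Λ : Type v} [Infinite Λ]
    (a : ℕ → B) (ha0 : a 0 = ⊤) (hmono : Antitone a) (hainf : (⨅ n, a n) = ⊥)
    (b : Finset Λ → B) (hb : IsMultDistribution b)
    (hle : ∀ s : Finset Λ, b s ≤ a s.card) :
    ∃ A : Set B, IsBAAntichain A ∧ Cardinal.lift.{u} #Λ ≤ Cardinal.lift.{v} #A :=
  stmt2_general a hainf b hb hle
end

section
/- Suppose σ is a regular uncountable cardinal, σ ≤ μ, μ^{<σ} = μ, and λ = μ⁺. Then there exist functions F₀, F₁ : λ × λ → λ and a function G, defined on the collection of subsets of λ of cardinality less than σ and taking values in μ, with the following property: whenever w_0, …, w_{k-1} is a finite sequence of subsets of λ, each of cardinality less than σ, each closed under F₀ and F₁ (meaning: for all α, β ∈ w_i, both F₀(α,β) ∈ w_i and F₁(α,β) ∈ w_i), and with G(w_0) = G(w_1) = ⋯ = G(w_{k-1}), then the closure P of {w_0, …, w_{k-1}} under pairwise intersections forms a tree under ⊆: for all u, v, w ∈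 P, if u ⊆ w and v ⊆ w, then u ⊆ v or v ⊆ u. -/
open Cardinal

/-!
Fix an embedding `ι : μ ↪ λ` and, for each `β < λ = μ⁺`, an injection `e_β : β ↪ μ`.
Let `F₀(α, β) = ι (e_β α)` for `α < β`, let `F₁` invert this, and let `G(w)` code the trace
`ι⁻¹ w ⊆ μ`; there are only `μ^{<σ} = μ` such traces. If `w, w'` are closed and `G(w) = G(w')`,
then for `δ < γ` with `γ ∈ w ∩ w'` and `δ ∈ w'`, the point `F₀(δ, γ)` lies in the common trace, so
`δ = F₁(F₀(δ, γ), γ) ∈ w`. Hence every intersection `⋂_{i ∈ t} w_i` is an initial segment of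
any intersection `x` containing it, and initial segments of `x` are linearly ordered by `⊆`.
-/

universe u

theorem Set.subset_or_subset_of_isLowerSet_preimage_val {α : Type*} [LinearOrder α]
    {x u v : Set α} (hux : u ⊆ x) (hvx : v ⊆ x) (hu : IsLowerSet ((↑) ⁻¹' u : Set x))
    (hv : IsLowerSet ((↑) ⁻¹' v : Set x)) : u ⊆ v ∨ v ⊆ u := by
  rw [← Subtype.range_coe (s := x)] at hux hvx
  exact (hu.total hv).imp (Set.preimage_subset_preimage_iff hux).1
    (Set.preimage_subset_preimage_iff hvx).1

theorem isLowerSet_preimage_val_biInter {α ι : Type*} [PartialOrder α] {w : ι → Set α}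
    (hw : ∀ i j, ∀ γ ∈ w i, γ ∈ w j → ∀ δ ∈ w j, δ < γ → δ ∈ w i)
    {t r : Finset ι} (hr : r.Nonempty) :
    IsLowerSet ((↑) ⁻¹' ⋂ i ∈ t, w i : Set ↥(⋂ i ∈ r, w i)) := by
  obtain ⟨j, hj⟩ := hr
  rw [isLowerSet_iff_forall_lt]
  rintro ⟨γ, hγr⟩ ⟨δ, hδr⟩ hδγ hγt
  simp only [Set.mem_preimage, Set.mem_iInter] at hγr hδr hγt ⊢
  exact fun i hi => hw i j γ (hγt i hi) (hγr j hj) δ (hδr j hj) hδγ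

theorem Cardinal.mk_setOf_mk_lt_le (α : Type u) (σ : Cardinal.{u}) :
    #{t : Set α // #t < σ} ≤ σ * max #α ℵ₀ ^< σ := by
  have hcover : {t : Set α | #t < σ} ⊆ ⋃ i : σ.ord.ToType, {t | #t ≤ #(Set.Iio i)} := by
    intro t ht
    have hlt : (#t).ord < Ordinal.type (α := σ.ord.ToType) (· < ·) := by simpa using ht
    refine Set.mem_iUnion.2 ⟨Ordinal.enum (· < ·) ⟨_, hlt⟩, ?_⟩
    have hcard := congrArg Ordinal.card (Ordinal.typein_enum _ hlt)
    rw [card_ord] at hcard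
    exact hcard.ge
  calc #{t : Set α // #t < σ}
      ≤ #(⋃ i : σ.ord.ToType, {t : Set α | #t ≤ #(Set.Iio i)}) := mk_le_mk_of_subset hcover
    _ ≤ #σ.ord.ToType * ⨆ i, #{t : Set α | #t ≤ #(Set.Iio i)} := mk_iUnion_le _
    _ ≤ σ * max #α ℵ₀ ^< σ := by
      rw [mk_ord_toType]
      gcongr
      exact ciSup_le' fun i => (mk_bounded_set_le α _).trans
        (le_powerlt _ (by simpa using mk_Iio_lt i))

theorem exists_injOn_setOf_mk_lt {M : Type u} [Nonempty M] {σ : Cardinal.{u}}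
    (h : #{t : Set M // #t < σ} ≤ #M) : ∃ G : Set M → M, Set.InjOn G {t | #t < σ} := by
  classical
  obtain ⟨Φ⟩ := h
  refine ⟨fun t => if ht : #t < σ then Φ ⟨t, ht⟩ else Classical.arbitrary M, ?_⟩
  intro t (ht : #t < σ) t' (ht' : #t' < σ) heq
  simp only [dif_pos ht, dif_pos ht'] at heq
  exact congrArg Subtype.val (Φ.injective heq)

namespace SegmentCode

variable {Λ M : Type*} [Preorder Λ] (ι : M ↪ Λ) (e : ∀ β : Λ, Set.Iio β ↪ M)

open Classical in
noncomputable def code (p : Λ × Λ) : Λ :=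
  if h : p.1 < p.2 then ι (e p.2 ⟨p.1, h⟩) else p.1

open Classical in
noncomputable def decode (p : Λ × Λ) : Λ :=
  if h : ∃ a : Set.Iio p.2, ι (e p.2 a) = p.1 then h.choose else p.1

variable {ι e}

theorem decode_code {δ γ : Λ} (h : δ < γ) : decode ι e (code ι e (δ, γ), γ) = δ := by
  have hex : ∃ a : Set.Iio γ, ι (e γ a) = ι (e γ ⟨δ, h⟩) := ⟨_, rfl⟩
  have hcode : code ι e (δ, γ) = ι (e γ ⟨δ, h⟩) := dif_pos h
  rw [hcode, decode, dif_pos hex]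
  exact congrArg Subtype.val ((e γ).injective (ι.injective hex.choose_spec))

theorem mem_of_lt_of_preimage_eq {w w' : Set Λ}
    (hcode : ∀ α ∈ w', ∀ β ∈ w', code ι e (α, β) ∈ w')
    (hdecode : ∀ α ∈ w, ∀ β ∈ w, decode ι e (α, β) ∈ w) (htrace : ι ⁻¹' w = ι ⁻¹' w')
    {γ δ : Λ} (hγ : γ ∈ w) (hγ' : γ ∈ w') (hδ' : δ ∈ w') (hδγ : δ < γ) : δ ∈ w := by
  have hcode_mem : code ι e (δ, γ) ∈ w := by
    have h := hcode δ hδ' γ hγ'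
    rw [code, dif_pos hδγ] at h ⊢
    exact (htrace ▸ h : e γ ⟨δ, hδγ⟩ ∈ ι ⁻¹' w)
  simpa only [decode_code hδγ] using hdecode _ hcode_mem γ hγ

end SegmentCode

open SegmentCode in
theorem stmt3_general (σ μ : Cardinal.{0}) (hunc : ℵ₀ < σ) (hσμ : σ ≤ μ)
    (hμ : μ ^< σ = μ) :
    ∃ (F₀ F₁ : (Order.succ μ).ord.ToType × (Order.succ μ).ord.ToType →
        (Order.succ μ).ord.ToType)
      (G : Set (Order.succ μ).ord.ToType → μ.ord.ToType),
      ∀ (k : ℕ) (w : Fin k → Set (Order.succ μ).ord.ToType),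
        (∀ i, #(w i) < σ) →
        (∀ i, ∀ α ∈ w i, ∀ β ∈ w i, F₀ (α, β) ∈ w i ∧ F₁ (α, β) ∈ w i) →
        (∀ i j, G (w i) = G (w j)) →
        ∀ u ∈ {u | ∃ t : Finset (Fin k), t.Nonempty ∧ u = ⋂ i ∈ t, w i},
        ∀ v ∈ {u | ∃ t : Finset (Fin k), t.Nonempty ∧ u = ⋂ i ∈ t, w i},
        ∀ x ∈ {u | ∃ t : Finset (Fin k), t.Nonempty ∧ u = ⋂ i ∈ t, w i},
          u ⊆ x → v ⊆ x → u ⊆ v ∨ v ⊆ u := by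
  have hμ₀ : ℵ₀ ≤ μ := hunc.le.trans hσμ
  obtain ⟨ι⟩ : Nonempty (μ.ord.ToType ↪ (Order.succ μ).ord.ToType) := by
    rw [← le_def, mk_ord_toType, mk_ord_toType]
    exact Order.le_succ μ
  have he (β : (Order.succ μ).ord.ToType) : Nonempty (Set.Iio β ↪ μ.ord.ToType) := by
    rw [← le_def, mk_ord_toType, ← Order.lt_succ_iff]
    simpa using mk_Iio_lt β
  have : Nonempty μ.ord.ToType := mk_ne_zero_iff.1 (by simpa using (aleph0_pos.trans_le hμ₀).ne')
  obtain ⟨G, hG⟩ := exists_injOn_setOf_mk_lt (M := μ.ord.ToType) (σ := σ) <| by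
    calc #{t : Set μ.ord.ToType // #t < σ} ≤ σ * max μ ℵ₀ ^< σ := by
          simpa using mk_setOf_mk_lt_le μ.ord.ToType σ
      _ = #μ.ord.ToType := by
        rw [max_eq_left hμ₀, hμ, mul_eq_right hμ₀ hσμ (aleph0_pos.trans hunc).ne', mk_ord_toType]
  refine ⟨code ι (fun β => (he β).some), decode ι (fun β => (he β).some),
    fun u => G (ι ⁻¹' u), ?_⟩
  intro k w hsmall hclosed hcolor
  have hsmall' (i : Fin k) : #(ι ⁻¹' w i) < σ :=
    (mk_preimage_of_injective _ _ ι.injective).trans_lt (hsmall i)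
  have hagree (i j : Fin k) : ∀ γ ∈ w i, γ ∈ w j → ∀ δ ∈ w j, δ < γ → δ ∈ w i :=
    fun _ hγ hγ' _ hδ' hδγ => mem_of_lt_of_preimage_eq (fun α hα β hβ => (hclosed j α hα β hβ).1)
      (fun α hα β hβ => (hclosed i α hα β hβ).2) (hG (hsmall' i) (hsmall' j) (hcolor i j))
      hγ hγ' hδ' hδγ
  rintro _ ⟨t, -, rfl⟩ _ ⟨s, -, rfl⟩ _ ⟨r, hr, rfl⟩ hux hvx
  exact Set.subset_or_subset_of_isLowerSet_preimage_val hux hvx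
    (isLowerSet_preimage_val_biInter hagree hr) (isLowerSet_preimage_val_biInter hagree hr)

/-- if `σ` is regular uncountable, `σ ≤ μ`, `μ^{<σ} = μ` and `λ = μ⁺`
(represented by the type `Λ` of ordinals below the initial ordinal of `μ⁺`), then there are
`F₀ F₁ : λ × λ → λ` and a coloring `G` of the subsets of `λ` of size `< σ` by values in `μ`
(represented by the type `μ.ord.toType` of cardinality `μ`), such that for any finite
monochromatic sequence of `F₀,F₁`-closed subsets of `λ` of size `< σ`, the closure of the
sequence under pairwise intersections is a tree under `⊆`. -/
theorem stmt3 (σ μ : Cardinal.{0}) (hreg : σ.IsRegular) (hunc : ℵ₀ < σ) (hσμ : σ ≤ μ)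
    (hμ : μ ^< σ = μ) :
    ∃ (F₀ F₁ : (Order.succ μ).ord.ToType × (Order.succ μ).ord.ToType →
        (Order.succ μ).ord.ToType)
      (G : Set (Order.succ μ).ord.ToType → μ.ord.ToType),
      ∀ (k : ℕ) (w : Fin k → Set (Order.succ μ).ord.ToType),
        (∀ i, #(w i) < σ) →
        (∀ i, ∀ α ∈ w i, ∀ β ∈ w i, F₀ (α, β) ∈ w i ∧ F₁ (α, β) ∈ w i) →
        (∀ i j, G (w i) = G (w j)) →
        ∀ u ∈ {u | ∃ t : Finset (Fin k), t.Nonempty ∧ u = ⋂ i ∈ t, w i},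
        ∀ v ∈ {u | ∃ t : Finset (Fin k), t.Nonempty ∧ u = ⋂ i ∈ t, w i},
        ∀ x ∈ {u | ∃ t : Finset (Fin k), t.Nonempty ∧ u = ⋂ i ∈ t, w i},
          u ⊆ x → v ⊆ x → u ⊆ v ∨ v ⊆ u :=
  stmt3_general σ μ hunc hσμ hμ
end

section
/- Let μ be an infinite cardinal and λ = μ⁺. For each ordinal α < λ, let f_α be a bijection from {β : β < α} onto {γ : γ < |α|}, where |α| denotes the cardinality of α. Call a set w ⊆ λ closed if for every α ∈ w: (i) for every β ∈ w with β < α, f_α(β) ∈ w, and (ii) for every γ ∈ w with γ < |α|, f_α⁻¹(γ) ∈ w. Then whenever w₀ ⊆ w₁ are both closed and w₀ ∩ μ = w₁ ∩ μ, the set w₀ is an initial segment of w₁: for all α ∈ w₀ and all β ∈ w₁ with β < α, we have β ∈ w₀. -/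
open Cardinal Ordinal

/-- `w` is closed under the bijections `f_α` and their inverses: for `α ∈ w`,
if `β ∈ w` and `β < α` then `f_α(β) ∈ w`, and if `γ ∈ w` and `γ < |α|` then `f_α⁻¹(γ) ∈ w`. -/
def IsFClosed (μ : Cardinal.{0})
    (f : ∀ α : Ordinal.{0}, α < (Order.succ μ).ord →
      ({β : Ordinal.{0} // β < α} ≃ {γ : Ordinal.{0} // γ < α.card.ord}))
    (w : Set Ordinal.{0}) : Prop :=
  ∀ α ∈ w, ∀ hα : α < (Order.succ μ).ord,
    (∀ β ∈ w, ∀ h : β < α, ((f α hα ⟨β, h⟩ : {γ : Ordinal // γ < α.card.ord}) : Ordinal) ∈ w) ∧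
    (∀ γ ∈ w, ∀ h : γ < α.card.ord,
      (((f α hα).symm ⟨γ, h⟩ : {β : Ordinal // β < α}) : Ordinal) ∈ w)

/-- let `μ` be infinite, `λ = μ⁺` and for `α < λ` let `f_α` be a bijection from
`{β : β < α}` onto `{γ : γ < |α|}`.  If `w₀ ⊆ w₁ ⊆ λ` are both closed and `w₀ ∩ μ = w₁ ∩ μ`,
then `w₀` is an initial segment of `w₁`. -/
theorem stmt4 (μ : Cardinal.{0}) (hμ : ℵ₀ ≤ μ)
    (f : ∀ α : Ordinal.{0}, α < (Order.succ μ).ord →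
      ({β : Ordinal.{0} // β < α} ≃ {γ : Ordinal.{0} // γ < α.card.ord}))
    (w₀ w₁ : Set Ordinal.{0})
    (hw₀ : w₀ ⊆ Set.Iio (Order.succ μ).ord) (hw₁ : w₁ ⊆ Set.Iio (Order.succ μ).ord)
    (hsub : w₀ ⊆ w₁)
    (hcl₀ : IsFClosed μ f w₀) (hcl₁ : IsFClosed μ f w₁)
    (hμeq : w₀ ∩ Set.Iio μ.ord = w₁ ∩ Set.Iio μ.ord) :
    ∀ α ∈ w₀, ∀ β ∈ w₁, β < α → β ∈ w₀ := by
  intro α hα β hβ hβα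
  have hαL : α < (Order.succ μ).ord := hw₀ hα
  have hcard : α.card.ord ≤ μ.ord := by
    exact Cardinal.ord_le_ord.2 (Order.lt_succ_iff.1 (Cardinal.lt_ord.1 hαL))
  -- γ := f_α β ∈ w₁ and γ < μ.ord
  set γ : Ordinal := ((f α hαL ⟨β, hβα⟩ : {γ : Ordinal // γ < α.card.ord}) : Ordinal) with hγdef
  have hγlt : γ < α.card.ord := (f α hαL ⟨β, hβα⟩).2
  have hγw₁ : γ ∈ w₁ := (hcl₁ α (hsub hα) hαL).1 β hβ hβα
  have hγw₀ : γ ∈ w₀ := by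
    have : γ ∈ w₁ ∩ Set.Iio μ.ord := ⟨hγw₁, lt_of_lt_of_le hγlt hcard⟩
    rw [← hμeq] at this
    exact this.1
  have := (hcl₀ α hα hαL).2 γ hγw₀ hγlt
  have heq : (((f α hαL).symm ⟨γ, hγlt⟩ : {β : Ordinal // β < α}) : Ordinal) = β := by
    have : (f α hαL).symm ⟨γ, hγlt⟩ = ⟨β, hβα⟩ := by
      apply (f α hαL).symm_apply_eq.2
      simp [hγdef]
    rw [this]
  rwa [heq] at this
end

section
/- Let B₁ and B₂ be Boolean algebras, h : B₁ → B₂ a surjective homomorphism of Boolean algebras (preserving ⊤, ⊥, meet, join, and complement), U₂ an ultrafilter on B₂, and U₁ = h⁻¹(U₂). Then U₁ is an ultrafilter on B₁, and if U₁ is λ-OK then U₂ is λ-OK. -/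
/-- `U` is `Λ`-OK: every decreasing sequence from `U` starting at `⊤` has a multiplicative
refinement in `U` indexed by the finite subsets of `Λ`. -/
def IsOKFor {B : Type*} [BooleanAlgebra B] (Λ : Type*) (U : Set B) : Prop :=
  ∀ a : ℕ → B, (∀ n, a n ∈ U) → Antitone a → a 0 = ⊤ →
    ∃ b : Finset Λ → B, IsMultDistribution b ∧ (∀ s : Finset Λ, b s ∈ U) ∧
      ∀ s : Finset Λ, b s ≤ a s.card

/-!
Pulling back along `h` preserves the ultrafilter axioms because `h` preserves `⊥`, meets,
complements, and hence order. For the OK property, lift a decreasing sequence `(aₙ)` in `U₂`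
to a decreasing sequence in `h⁻¹(U₂)` by taking running meets of arbitrary preimages; a
multiplicative distribution refining the lift is then pushed forward by `h`, which preserves
finite meets, and its values stay nonzero because they lie in `U₂`.
-/

theorem exists_antitone_lift_of_surjective {F α β : Type*} [SemilatticeInf α]
    [SemilatticeInf β] [FunLike F α β] [InfHomClass F α β] (f : F) (hf : Function.Surjective f)
    {a : ℕ → β} (ha : Antitone a) {x₀ : α} (hx₀ : f x₀ = a 0) :
    ∃ a' : ℕ → α, Antitone a' ∧ a' 0 = x₀ ∧ ∀ n, f (a' n) = a n := by
  choose c hc using fun n => hf (a n)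
  let a' : ℕ → α := fun n => Nat.rec x₀ (fun k x => x ⊓ c (k + 1)) n
  refine ⟨a', antitone_nat_of_succ_le fun n => inf_le_left, rfl, fun n => ?_⟩
  induction n with
  | zero => exact hx₀
  | succ n ih =>
    change f (a' n ⊓ c (n + 1)) = a (n + 1)
    rw [map_inf, ih, hc, inf_eq_right.mpr (ha n.le_succ)]

section

variable {B₁ B₂ : Type*} [BooleanAlgebra B₁] [BooleanAlgebra B₂]

theorem IsUltrafilterOn.preimage (f : InfHom B₁ B₂) (hbot : f ⊥ = ⊥)
    (hcompl : ∀ a, f aᶜ = (f a)ᶜ) {U : Set B₂} (hU : IsUltrafilterOn U) :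
    IsUltrafilterOn (f ⁻¹' U) := by
  obtain ⟨hbotU, hup, hmeet, hdich⟩ := hU
  refine ⟨by simpa [hbot] using hbotU, fun a ha b hab => hup _ ha _ (OrderHomClass.mono f hab),
    fun a ha b hb => ?_, fun a => ?_⟩
  · simpa [Set.mem_preimage, map_inf] using hmeet _ ha _ hb
  · simpa [Set.mem_preimage, hcompl] using hdich (f a)

theorem IsMultDistribution.map {Λ : Type*} {b : Finset Λ → B₁} (hb : IsMultDistribution b)
    (f : InfTopHom B₁ B₂) (hne : ∀ s, f (b s) ≠ ⊥) : IsMultDistribution (f ∘ b) := by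
  obtain ⟨-, hempty, hanti, hmult⟩ := hb
  refine ⟨hne, by simp [hempty], fun s t hst => OrderHomClass.mono f (hanti s t hst),
    fun s => ?_⟩
  simp only [Function.comp_apply, hmult s, map_finset_inf]
  rfl

theorem IsOKFor.of_preimage {Λ : Type*} (f : InfTopHom B₁ B₂) (hf : Function.Surjective f)
    {U : Set B₂} (hbotU : ⊥ ∉ U) (hOK : IsOKFor Λ (f ⁻¹' U)) : IsOKFor Λ U := by
  intro a haU hanti ha0
  obtain ⟨a', hanti', ha'0, hfa'⟩ :=
    exists_antitone_lift_of_surjective f hf hanti (x₀ := ⊤) (by simp [ha0])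
  obtain ⟨b, hb, hbU, hba'⟩ :=
    hOK a' (fun n => by simp [Set.mem_preimage, hfa', haU]) hanti' ha'0
  refine ⟨f ∘ b, hb.map f fun s hs => hbotU (hs ▸ hbU s), hbU, fun s => ?_⟩
  simpa [hfa'] using OrderHomClass.mono f (hba' s)

end

theorem stmt5_general {B₁ : Type u} {B₂ : Type v} [BooleanAlgebra B₁] [BooleanAlgebra B₂]
    (h : B₁ → B₂) (hsurj : Function.Surjective h)
    (htop : h ⊤ = ⊤) (hbot : h ⊥ = ⊥)
    (hinf : ∀ a b : B₁, h (a ⊓ b) = h a ⊓ h b)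
    (hcompl : ∀ a : B₁, h aᶜ = (h a)ᶜ)
    (U₂ : Set B₂) (hU₂ : IsUltrafilterOn U₂) (lam : Cardinal.{w}) :
    IsUltrafilterOn (h ⁻¹' U₂) ∧
      (IsOKFor lam.ord.ToType (h ⁻¹' U₂) → IsOKFor lam.ord.ToType U₂) := by
  let φ : InfTopHom B₁ B₂ := { toFun := h, map_inf' := hinf, map_top' := htop }
  exact ⟨hU₂.preimage φ.toInfHom hbot hcompl, IsOKFor.of_preimage φ hsurj hU₂.1⟩

/-- if `h : B₁ → B₂` is a surjective homomorphism of Boolean algebras and `U₂`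
is an ultrafilter on `B₂`, then `U₁ = h⁻¹(U₂)` is an ultrafilter on `B₁`, and if `U₁` is
`λ`-OK then so is `U₂`. -/
theorem stmt5 {B₁ : Type u} {B₂ : Type v} [BooleanAlgebra B₁] [BooleanAlgebra B₂]
    (h : B₁ → B₂) (hsurj : Function.Surjective h)
    (htop : h ⊤ = ⊤) (hbot : h ⊥ = ⊥)
    (hinf : ∀ a b : B₁, h (a ⊓ b) = h a ⊓ h b) (hsup : ∀ a b : B₁, h (a ⊔ b) = h a ⊔ h b)
    (hcompl : ∀ a : B₁, h aᶜ = (h a)ᶜ)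
    (U₂ : Set B₂) (hU₂ : IsUltrafilterOn U₂) (lam : Cardinal.{w}) :
    IsUltrafilterOn (h ⁻¹' U₂) ∧
      (IsOKFor lam.ord.ToType (h ⁻¹' U₂) → IsOKFor lam.ord.ToType U₂) :=
  stmt5_general h hsurj htop hbot hinf hcompl U₂ hU₂ lam
end

section
/- Let M be a model of T_cas. For each A ⊆ P^M, let p_A be the set of formulas {I(x)} ∪ {¬I_n(x) : n < ω} ∪ {x ≠ b : b ∈ I^M} ∪ {R(a,x) : a ∈ A} ∪ {¬R(a,x) : a ∈ P^M \ A}. Then p_A is finitely satisfiable in M and has a unique extension to a complete 1-type over M, and this complete type is nonalgebraic. Moreover, every nonalgebraic complete 1-type over M containing I(x) and ¬I_n(x) for every n < ω is obtained this way from a unique A ⊆ P^M. -/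
open FirstOrder FirstOrder.Language

/-- Unary relation symbols of the Casanovas language: `P`, `I`, and `I_n` for `n < ω`. -/
inductive CasRel1 : Type
  | P : CasRel1
  | I : CasRel1
  | In (n : ℕ) : CasRel1

/-- The Casanovas language: unary symbols `P`, `I`, `I_n (n < ω)` and a binary symbol `R`. -/
def Lcas : FirstOrder.Language :=
  ⟨fun _ => Empty, fun n => match n with
    | 1 => CasRel1
    | 2 => Unit
    | _ => Empty⟩

variable (M : Type u) [Lcas.Structure M]

/-- The interpretation of `P` in `M`. -/
def PM : Set M := {x | Structure.RelMap (L := Lcas) (n := 1) (CasRel1.P : Lcas.Relations 1) ![x]}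

/-- The interpretation of `I` in `M`. -/
def IM : Set M := {x | Structure.RelMap (L := Lcas) (n := 1) (CasRel1.I : Lcas.Relations 1) ![x]}

/-- The interpretation of `I_n` in `M`. -/
def InM (n : ℕ) : Set M := {x | Structure.RelMap (L := Lcas) (n := 1) (CasRel1.In n : Lcas.Relations 1) ![x]}

/-- The interpretation of `R` in `M`. -/
def RM (x y : M) : Prop := Structure.RelMap (L := Lcas) (n := 2) (Unit.unit : Lcas.Relations 2) ![x, y]

/-- `M` is a model of `T_cas`. -/
structure IsTcasModel : Prop where
  part : ∀ x : M, x ∈ PM M ↔ x ∉ IM M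
  P_inf : (PM M).Infinite
  I_inf : (IM M).Infinite
  In_sub : ∀ n : ℕ, InM M n ⊆ IM M
  In_inf : ∀ n : ℕ, (InM M n).Infinite
  In_disj : ∀ m n : ℕ, m ≠ n → Disjoint (InM M m) (InM M n)
  R_sub : ∀ x y : M, RM M x y → x ∈ PM M ∧ y ∈ IM M
  R_count : ∀ a ∈ PM M, ∀ n : ℕ, ∃ s : Finset M, s.card = n ∧
    ∀ b : M, b ∈ s ↔ b ∈ InM M n ∧ RM M a b
  ext_P : ∀ B₀ B₁ : Finset M, ↑B₀ ⊆ IM M → ↑B₁ ⊆ IM M → Disjoint B₀ B₁ →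
    (∀ n : ℕ, ((B₁ : Set M) ∩ InM M n).ncard ≤ n) →
    ∃ a ∈ PM M, (∀ b ∈ B₁, RM M a b) ∧ ∀ b ∈ B₀, ¬ RM M a b
  ext_I : ∀ A₀ A₁ : Finset M, ↑A₀ ⊆ PM M → ↑A₁ ⊆ PM M → Disjoint A₀ A₁ →
    ∃ b ∈ IM M, (∀ a ∈ A₁, RM M a b) ∧ ∀ a ∈ A₀, ¬ RM M a b

/-- The formula `P(x)`, with free variable `Sum.inr 0` and parameters from `M`. -/
def fP : Lcas.Formula (M ⊕ Fin 1) :=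
  Relations.formula₁ (CasRel1.P : Lcas.Relations 1) (Term.var (Sum.inr 0))

/-- The formula `I(x)`. -/
def fI : Lcas.Formula (M ⊕ Fin 1) :=
  Relations.formula₁ (CasRel1.I : Lcas.Relations 1) (Term.var (Sum.inr 0))

/-- The formula `I_n(x)`. -/
def fIn (n : ℕ) : Lcas.Formula (M ⊕ Fin 1) :=
  Relations.formula₁ (CasRel1.In n : Lcas.Relations 1) (Term.var (Sum.inr 0))

variable {M}

/-- The formula `R(a, x)`, for a parameter `a : M`. -/
def fRleft (a : M) : Lcas.Formula (M ⊕ Fin 1) :=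
  Relations.formula₂ (Unit.unit : Lcas.Relations 2) (Term.var (Sum.inl a)) (Term.var (Sum.inr 0))

/-- The formula `R(x, b)`, for a parameter `b : M`. -/
def fRright (b : M) : Lcas.Formula (M ⊕ Fin 1) :=
  Relations.formula₂ (Unit.unit : Lcas.Relations 2) (Term.var (Sum.inr 0)) (Term.var (Sum.inl b))

/-- The formula `x ≠ b`, for a parameter `b : M`. -/
def fNe (b : M) : Lcas.Formula (M ⊕ Fin 1) :=
  (Term.equal (Term.var (Sum.inr 0)) (Term.var (Sum.inl b))).not

variable (M)

/-- `a` realizes the formula `φ` (with parameters from `M` and one free variable). -/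
def RealizesAt (φ : Lcas.Formula (M ⊕ Fin 1)) (a : M) : Prop :=
  φ.Realize (Sum.elim id fun _ => a)

/-- Every finite subset of `p` is satisfiable in `M`. -/
def FinSatIn (p : Set (Lcas.Formula (M ⊕ Fin 1))) : Prop :=
  ∀ s : Finset (Lcas.Formula (M ⊕ Fin 1)), ↑s ⊆ p → ∃ a : M, ∀ φ ∈ s, RealizesAt M φ a

/-- `p` is a complete 1-type over `M`: a maximal finitely satisfiable set of formulas in one
free variable with parameters from `M`. -/
def IsCompleteTypeOver (p : Set (Lcas.Formula (M ⊕ Fin 1))) : Prop :=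
  FinSatIn M p ∧ ∀ q : Set (Lcas.Formula (M ⊕ Fin 1)), FinSatIn M q → p ⊆ q → q = p

/-- `p` is nonalgebraic: it contains `x ≠ b` for every `b : M`. -/
def IsNonalgebraic (p : Set (Lcas.Formula (M ⊕ Fin 1))) : Prop :=
  ∀ b : M, fNe b ∈ p


variable {M} in
/-- The partial type `p_A` over `M`, for `A ⊆ P^M`: it contains `I(x)`, `¬I_n(x)` for all
`n < ω`, `x ≠ b` for all `b ∈ I^M`, `R(a,x)` for `a ∈ A`, and `¬R(a,x)` for `a ∈ P^M \ A`. -/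
def typeA (A : Set M) : Set (Lcas.Formula (M ⊕ Fin 1)) :=
  {fI M} ∪ {φ | ∃ n : ℕ, φ = (fIn M n).not} ∪ {φ | ∃ b ∈ IM M, φ = fNe b} ∪
    {φ | ∃ a ∈ A, φ = fRleft a} ∪ {φ | ∃ a ∈ PM M \ A, φ = (fRleft a).not}

/-!
A formula `φ(x)` over `M` mentions finitely many parameters `C` and only finitely many `I_n`.
If `b, b' ∈ I` lie outside `C` and outside `I_0, …, I_{t-1}`, and have the same `R`-pattern over
`C`, then `φ(b) ↔ φ(b')` as soon as `t ≥ |C| + 1 + rank φ`. This is an Ehrenfeucht–Fraïssé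
argument in which a point may move only if it avoids the small `I_n`, and a moved `P`-point
must keep its neighbours in them. Axioms (5) and (6) provide the answering moves, and since
`t` bounds the size of the configuration, the count condition of (5) holds in the large `I_n`.
So a finite part of `p_A` decides every formula, and the formulas that `p_A` implies in `M` form
its only completion. Conversely, a type containing `I(x)` and every `¬I_n(x)` contains `p_A` for
`A = {a ∈ P | R(a, x) ∈ q}`.
-/

open scoped Classical

theorem inl_mem_freeVarFinset_fNe {M : Type u} (c : M) : Sum.inl c ∈ (fNe c).freeVarFinset := by
  simp [fNe, Term.equal, Term.bdEqual, Term.relabel, BoundedFormula.freeVarFinset,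
    Term.varFinsetLeft]

theorem inl_mem_freeVarFinset_fRleft {M : Type u} (c : M) :
    Sum.inl c ∈ (fRleft c).freeVarFinset := by
  simp [fRleft, Relations.formula₂, Relations.formula, Relations.boundedFormula, Term.relabel,
    BoundedFormula.freeVarFinset, Term.varFinsetLeft]

section Realize

variable {M : Type u} [Lcas.Structure M]

@[simp] theorem realizesAt_not {φ : Lcas.Formula (M ⊕ Fin 1)} {a : M} :
    RealizesAt M φ.not a ↔ ¬ RealizesAt M φ a :=
  BoundedFormula.realize_not

@[simp] theorem realizesAt_fI {a : M} : RealizesAt M (fI M) a ↔ a ∈ IM M :=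
  Formula.realize_rel₁

@[simp] theorem realizesAt_fIn {n : ℕ} {a : M} : RealizesAt M (fIn M n) a ↔ a ∈ InM M n :=
  Formula.realize_rel₁

@[simp] theorem realizesAt_fNe {a b : M} : RealizesAt M (fNe b) a ↔ a ≠ b := by
  simp [RealizesAt, fNe]

@[simp] theorem realizesAt_fRleft {a c : M} : RealizesAt M (fRleft c) a ↔ RM M c a :=
  Formula.realize_rel₂

theorem typeA_subset_iff {A : Set M} {q : Set (Lcas.Formula (M ⊕ Fin 1))} :
    typeA A ⊆ q ↔ fI M ∈ q ∧ (∀ n, (fIn M n).not ∈ q) ∧ (∀ b ∈ IM M, fNe b ∈ q) ∧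
      (∀ a ∈ A, fRleft a ∈ q) ∧ ∀ a ∈ PM M \ A, (fRleft a).not ∈ q := by
  refine ⟨fun h => ⟨h ?_, fun n => h ?_, fun b hb => h ?_, fun a ha => h ?_, fun a ha => h ?_⟩,
    ?_⟩
  · exact Or.inl (Or.inl (Or.inl (Or.inl rfl)))
  · exact Or.inl (Or.inl (Or.inl (Or.inr ⟨n, rfl⟩)))
  · exact Or.inl (Or.inl (Or.inr ⟨b, hb, rfl⟩))
  · exact Or.inl (Or.inr ⟨a, ha, rfl⟩)
  · exact Or.inr ⟨a, ha, rfl⟩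
  · rintro ⟨hI, hIn, hNe, hR, hnR⟩ φ
      ((((rfl | ⟨n, rfl⟩) | ⟨b, hb, rfl⟩) | ⟨a, ha, rfl⟩) | ⟨a, ha, rfl⟩)
    exacts [hI, hIn n, hNe b hb, hR a ha, hnR a ha]

end Realize

theorem ncard_singleton_inter_InM_le {M : Type u} [Lcas.Structure M] {f : M}
    (hf0 : f ∉ InM M 0) (n : ℕ) : (({f} : Set M) ∩ InM M n).ncard ≤ n := by
  rcases n with _ | n
  · simp [Set.singleton_inter_eq_empty.mpr hf0]
  · exact (Set.ncard_inter_le_ncard_left _ _ (Set.finite_singleton f)).trans (by simp)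

namespace IsTcasModel

variable {M : Type u} [Lcas.Structure M] (hM : IsTcasModel M)
include hM

theorem mem_IM_iff {x : M} : x ∈ IM M ↔ x ∉ PM M := by
  rw [hM.part, not_not]

theorem not_RM_self (x : M) : ¬ RM M x x := fun h =>
  (hM.part x).mp (hM.R_sub x x h).1 (hM.R_sub x x h).2

theorem not_RM_of_mem_IM {x : M} (hx : x ∈ IM M) (y : M) : ¬ RM M x y := fun h =>
  (hM.part x).mp (hM.R_sub x y h).1 hx

theorem not_RM_of_mem_PM {y : M} (hy : y ∈ PM M) (x : M) : ¬ RM M x y := fun h =>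
  (hM.part y).mp hy (hM.R_sub x y h).2

theorem notMem_InM_of_mem_PM {x : M} (hx : x ∈ PM M) (n : ℕ) : x ∉ InM M n := fun h =>
  (hM.part x).mp hx (hM.In_sub n h)

theorem eq_of_mem_InM {x : M} {m n : ℕ} (hm : x ∈ InM M m) (hn : x ∈ InM M n) : m = n := by
  by_contra hmn
  exact Set.disjoint_left.mp (hM.In_disj m n hmn) hm hn

theorem finite_nbrs (a : M) (n : ℕ) : {b | b ∈ InM M n ∧ RM M a b}.Finite := by
  by_cases ha : a ∈ PM M
  · obtain ⟨s, -, hs⟩ := hM.R_count a ha n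
    exact s.finite_toSet.subset fun b hb => (hs b).mpr hb
  · exact Set.finite_empty.subset fun b hb => ha (hM.R_sub a b hb.2).1

noncomputable def nbrs (a : M) (n : ℕ) : Finset M := (hM.finite_nbrs a n).toFinset

theorem mem_nbrs {a b : M} {n : ℕ} : b ∈ hM.nbrs a n ↔ b ∈ InM M n ∧ RM M a b :=
  Set.Finite.mem_toFinset _

theorem card_nbrs {a : M} (ha : a ∈ PM M) (n : ℕ) : (hM.nbrs a n).card = n := by
  obtain ⟨s, rfl, hs⟩ := hM.R_count a ha n
  congr 1
  ext b
  rw [hM.mem_nbrs, hs]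

theorem notMem_InM_zero {a b : M} (hab : RM M a b) : b ∉ InM M 0 := fun hb => by
  have := hM.card_nbrs (hM.R_sub a b hab).1 0
  rw [Finset.card_eq_zero] at this
  simpa [this] using hM.mem_nbrs.mpr ⟨hb, hab⟩

theorem exists_PM_rel_notMem {f : M} (hf : f ∈ IM M) (hf0 : f ∉ InM M 0) (A : Finset M) :
    ∃ h ∈ PM M, RM M h f ∧ h ∉ A := by
  set B₀ := (A.biUnion (hM.nbrs · 2)).erase f
  have hB₀ : ↑B₀ ⊆ IM M := fun e he => by
    obtain ⟨a, -, hea⟩ := Finset.mem_biUnion.mp (Finset.mem_of_mem_erase he)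
    exact hM.In_sub 2 (hM.mem_nbrs.mp hea).1
  obtain ⟨h, hP, hrel, hnrel⟩ := hM.ext_P B₀ {f} hB₀ (by simpa using hf) (by simp [B₀])
    (fun n => by simpa using ncard_singleton_inter_InM_le hf0 n)
  refine ⟨h, hP, hrel f (Finset.mem_singleton_self f), fun hA => ?_⟩
  -- `h` has two neighbours in `I_2`, so one of them lies in `B₀`
  obtain ⟨e, he, hef⟩ :=
    Finset.exists_mem_ne (s := hM.nbrs h 2) (by rw [hM.card_nbrs hP]; norm_num) f
  exact hnrel e (Finset.mem_erase.mpr ⟨hef, Finset.mem_biUnion.mpr ⟨h, hA, he⟩⟩)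
    (hM.mem_nbrs.mp he).2

theorem exists_IM_notMem {A₀ A₁ : Finset M} (h₀ : ↑A₀ ⊆ PM M) (h₁ : ↑A₁ ⊆ PM M)
    (hdisj : Disjoint A₀ A₁) {a₀ : M} (ha₀ : a₀ ∈ A₁) (F : Finset M) :
    ∃ b ∈ IM M, b ∉ F ∧ (∀ a ∈ A₁, RM M a b) ∧ ∀ a ∈ A₀, ¬ RM M a b := by
  -- each candidate `f ∈ F` is excluded by a new negative requirement `k f` with `R(k f, f)`
  set F' := F.filter fun f => f ∈ IM M ∧ f ∉ InM M 0
  have hkill : ∀ f ∈ F', ∃ h ∈ PM M, RM M h f ∧ h ∉ A₁ := fun f hf =>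
    hM.exists_PM_rel_notMem (Finset.mem_filter.mp hf).2.1 (Finset.mem_filter.mp hf).2.2 A₁
  choose! k hkP hkR hkA using hkill
  have hsub : ↑(A₀ ∪ F'.image k) ⊆ PM M := by
    simpa [Set.union_subset_iff, Set.image_subset_iff] using ⟨h₀, fun f hf => hkP f hf⟩
  have hdisj' : Disjoint (A₀ ∪ F'.image k) A₁ := by
    refine Finset.disjoint_union_left.mpr ⟨hdisj, Finset.disjoint_left.mpr ?_⟩
    simpa using hkA
  obtain ⟨b, hbI, hb₁, hb₀⟩ := hM.ext_I _ A₁ hsub h₁ hdisj'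
  refine ⟨b, hbI, fun hbF => ?_, hb₁, fun a ha => hb₀ a (Finset.mem_union_left _ ha)⟩
  have hbF' : b ∈ F' := Finset.mem_filter.mpr ⟨hbF, hbI, hM.notMem_InM_zero (hb₁ a₀ ha₀)⟩
  exact hb₀ (k b) (Finset.mem_union_right _ (Finset.mem_image_of_mem k hbF')) (hkR b hbF')

theorem exists_IM_avoiding {A₀ A₁ : Finset M} (h₀ : ↑A₀ ⊆ PM M) (h₁ : ↑A₁ ⊆ PM M)
    (hdisj : Disjoint A₀ A₁) (t : ℕ) (F : Finset M) :
    ∃ b ∈ IM M, (∀ n < t, b ∉ InM M n) ∧ b ∉ F ∧ (∀ a ∈ A₁, RM M a b) ∧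
      ∀ a ∈ A₀, ¬ RM M a b := by
  -- a new positive requirement `a₀` confines `b ∈ I_n` to the finite set `nbrs a₀ n`
  obtain ⟨a₀, ha₀P, ha₀⟩ := (hM.P_inf.sdiff A₀.finite_toSet).nonempty
  obtain ⟨b, hbI, hbF, hb₁, hb₀⟩ := hM.exists_IM_notMem (A₁ := insert a₀ A₁) h₀
    (by simpa [Set.insert_subset_iff] using ⟨ha₀P, h₁⟩)
    (Finset.disjoint_insert_right.mpr ⟨ha₀, hdisj⟩) (Finset.mem_insert_self a₀ A₁)
    (F ∪ (Finset.range t).biUnion (hM.nbrs a₀))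
  refine ⟨b, hbI, fun n hn hbn => hbF (Finset.mem_union_right _ ?_),
    fun h => hbF (Finset.mem_union_left _ h), fun a ha => hb₁ a (Finset.mem_insert_of_mem ha), hb₀⟩
  exact Finset.mem_biUnion.mpr ⟨n, Finset.mem_range.mpr hn,
    hM.mem_nbrs.mpr ⟨hbn, hb₁ a₀ (Finset.mem_insert_self _ _)⟩⟩

theorem exists_PM_notMem {B₀ B₁ : Finset M} (h₀ : ↑B₀ ⊆ IM M) (h₁ : ↑B₁ ⊆ IM M)
    (hdisj : Disjoint B₀ B₁) (hcard : ∀ n, ((B₁ : Set M) ∩ InM M n).ncard ≤ n) (F : Finset M) :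
    ∃ a ∈ PM M, a ∉ F ∧ (∀ b ∈ B₁, RM M a b) ∧ ∀ b ∈ B₀, ¬ RM M a b := by
  -- each `x ∈ F` is ruled out by a non-neighbour `e x`, all taken in one `I_m` with `m` so
  -- large that adding them keeps the count of `I_m`-neighbours at most `m`
  set m := B₁.card + F.card
  have hsep : ∀ x : M, ∃ e ∈ InM M m, e ∉ B₀ ∧ ¬ RM M x e := fun x => by
    obtain ⟨e, he, heB⟩ :=
      ((hM.In_inf m).sdiff (hM.nbrs x m ∪ B₀).finite_toSet).nonempty
    simp only [Finset.coe_union, Set.mem_union, Finset.mem_coe, hM.mem_nbrs, not_or] at heB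
    exact ⟨e, he, heB.2, fun hr => heB.1 ⟨he, hr⟩⟩
  choose e he using hsep
  have h₁' : ↑(B₁ ∪ F.image e) ⊆ IM M := by
    simpa [Set.union_subset_iff, Set.image_subset_iff] using
      ⟨h₁, fun x _ => hM.In_sub m (he x).1⟩
  have hdisj' : Disjoint B₀ (B₁ ∪ F.image e) := by
    refine Finset.disjoint_union_right.mpr ⟨hdisj, Finset.disjoint_right.mpr ?_⟩
    simpa using fun x _ => (he x).2.1
  have hcard' : ∀ n, (↑(B₁ ∪ F.image e) ∩ InM M n).ncard ≤ n := fun n => by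
    by_cases hn : n = m
    · subst hn
      calc (↑(B₁ ∪ F.image e) ∩ InM M m).ncard ≤ (B₁ ∪ F.image e).card :=
            (Set.ncard_inter_le_ncard_left _ _ (Finset.finite_toSet _)).trans_eq
              (Set.ncard_coe_finset _)
        _ ≤ m := (Finset.card_union_le _ _).trans (by grw [Finset.card_image_le])
    · refine (Set.ncard_le_ncard ?_ (B₁.finite_toSet.inter_of_left _)).trans (hcard n)
      rintro b ⟨hb, hbn⟩
      rcases Finset.mem_union.mp hb with hb | hb
      · exact ⟨hb, hbn⟩
      · obtain ⟨x, -, rfl⟩ := Finset.mem_image.mp hb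
        exact absurd (hM.eq_of_mem_InM hbn (he x).1) hn
  obtain ⟨a, haP, ha₁, ha₀⟩ := hM.ext_P B₀ _ h₀ h₁' hdisj' hcard'
  refine ⟨a, haP, fun haF => (he a).2.2 (ha₁ _ ?_),
    fun b hb => ha₁ b (Finset.mem_union_left _ hb), ha₀⟩
  exact Finset.mem_union_right _ (F.mem_image_of_mem e haF)

theorem nbrs_eq_of_subset {a a' : M} (ha : a ∈ PM M) (ha' : a' ∈ PM M) {n : ℕ}
    (h : hM.nbrs a n ⊆ hM.nbrs a' n) : hM.nbrs a n = hM.nbrs a' n :=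
  Finset.eq_of_subset_of_card_le h (by rw [hM.card_nbrs ha, hM.card_nbrs ha'])

theorem ncard_union_nbrs_inter_InM_le {a : M} (ha : a ∈ PM M) {t : ℕ} {B : Finset M}
    (hsmall : ∀ b ∈ B, ∀ n < t, b ∉ InM M n) (hB : B.card ≤ t) (n : ℕ) :
    (↑(B ∪ (Finset.range t).biUnion (hM.nbrs a)) ∩ InM M n).ncard ≤ n := by
  have hS : ∀ e ∈ (Finset.range t).biUnion (hM.nbrs a), ∃ m < t, e ∈ InM M m ∧ RM M a e :=
    fun e he => by
      obtain ⟨m, hm, he⟩ := Finset.mem_biUnion.mp he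
      exact ⟨m, Finset.mem_range.mp hm, hM.mem_nbrs.mp he⟩
  by_cases hn : n < t
  · -- below `t` the only elements in `I_n` are the `n` neighbours of `a`
    refine (Set.ncard_le_ncard (t := ↑(hM.nbrs a n)) ?_ (Finset.finite_toSet _)).trans
      (by rw [Set.ncard_coe_finset, hM.card_nbrs ha])
    rintro e ⟨he, hen⟩
    rcases Finset.mem_union.mp he with he | he
    · exact absurd hen (hsmall e he n hn)
    · obtain ⟨m, -, -, hr⟩ := hS e he
      exact hM.mem_nbrs.mpr ⟨hen, hr⟩
  · refine (Set.ncard_le_ncard (t := ↑B) ?_ (Finset.finite_toSet _)).trans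
      (by rw [Set.ncard_coe_finset]; omega)
    rintro e ⟨he, hen⟩
    rcases Finset.mem_union.mp he with he | he
    · exact he
    · obtain ⟨m, hm, hem, -⟩ := hS e he
      exact absurd (hM.eq_of_mem_InM hem hen ▸ hm) hn

theorem exists_PM_copy {a : M} (ha : a ∈ PM M) {t : ℕ} {B₀ B₁ : Finset M}
    (h₀ : ↑B₀ ⊆ IM M) (h₁ : ↑B₁ ⊆ IM M) (hdisj : Disjoint B₀ B₁)
    (hsmall₀ : ∀ b ∈ B₀, ∀ n < t, b ∉ InM M n) (hsmall₁ : ∀ b ∈ B₁, ∀ n < t, b ∉ InM M n)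
    (hB₁ : B₁.card ≤ t) (F : Finset M) :
    ∃ a' ∈ PM M, a' ∉ F ∧ (∀ b ∈ B₁, RM M a' b) ∧ (∀ b ∈ B₀, ¬ RM M a' b) ∧
      ∀ n < t, ∀ e ∈ InM M n, (RM M a' e ↔ RM M a e) := by
  set S := (Finset.range t).biUnion (hM.nbrs a)
  have hS : ∀ e ∈ S, ∃ n < t, e ∈ InM M n := fun e he => by
    obtain ⟨n, hn, he⟩ := Finset.mem_biUnion.mp he
    exact ⟨n, Finset.mem_range.mp hn, (hM.mem_nbrs.mp he).1⟩
  have h₁' : ↑(B₁ ∪ S) ⊆ IM M := fun e he => by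
    rcases Finset.mem_union.mp he with he | he
    · exact h₁ he
    · obtain ⟨n, -, hn⟩ := hS e he
      exact hM.In_sub n hn
  have hdisj' : Disjoint B₀ (B₁ ∪ S) := by
    refine Finset.disjoint_union_right.mpr ⟨hdisj, Finset.disjoint_left.mpr fun e he heS => ?_⟩
    obtain ⟨n, hn, hen⟩ := hS e heS
    exact hsmall₀ e he n hn hen
  obtain ⟨a', ha'P, ha'F, ha'₁, ha'₀⟩ := hM.exists_PM_notMem h₀ h₁' hdisj'
    (hM.ncard_union_nbrs_inter_InM_le ha hsmall₁ hB₁) F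
  refine ⟨a', ha'P, ha'F, fun b hb => ha'₁ b (Finset.mem_union_left _ hb), ha'₀,
    fun n hn e hen => ?_⟩
  have hsub : hM.nbrs a n ⊆ hM.nbrs a' n := fun b hb => hM.mem_nbrs.mpr
    ⟨(hM.mem_nbrs.mp hb).1, ha'₁ b (Finset.mem_union_right _
      (Finset.mem_biUnion.mpr ⟨n, Finset.mem_range.mpr hn, hb⟩))⟩
  have heq := hM.nbrs_eq_of_subset ha ha'P hsub
  simpa [hM.mem_nbrs, hen] using (Finset.ext_iff.mp heq e).symm

end IsTcasModel

section

variable {M : Type u} [Lcas.Structure M] {t : ℕ} {β : Type*} {w w' : β → M}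

/-- The back-and-forth invariant: `w i ↦ w' i` preserves `=`, `P` and `R`, and each point it
moves avoids the `I_n` with `n < t` and has the same `R`-neighbours there as its image. -/
structure SimilarConfig (t : ℕ) (w w' : β → M) : Prop where
  eq_iff : ∀ i j, w i = w j ↔ w' i = w' j
  mem_PM_iff : ∀ i, w i ∈ PM M ↔ w' i ∈ PM M
  RM_iff : ∀ i j, RM M (w i) (w j) ↔ RM M (w' i) (w' j)
  notMem_InM : ∀ i, w i ≠ w' i → ∀ n < t, w i ∉ InM M n ∧ w' i ∉ InM M n
  RM_InM_iff : ∀ i, w i ≠ w' i → ∀ n < t, ∀ e ∈ InM M n, (RM M (w i) e ↔ RM M (w' i) e)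

namespace SimilarConfig

theorem symm (h : SimilarConfig t w w') : SimilarConfig t w' w where
  eq_iff i j := (h.eq_iff i j).symm
  mem_PM_iff i := (h.mem_PM_iff i).symm
  RM_iff i j := (h.RM_iff i j).symm
  notMem_InM i hi n hn := (h.notMem_InM i (Ne.symm hi) n hn).symm
  RM_InM_iff i hi n hn e he := (h.RM_InM_iff i (Ne.symm hi) n hn e he).symm

theorem comp (h : SimilarConfig t w w') {γ : Type*} (g : γ → β) :
    SimilarConfig t (w ∘ g) (w' ∘ g) where
  eq_iff i j := h.eq_iff (g i) (g j)
  mem_PM_iff i := h.mem_PM_iff (g i)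
  RM_iff i j := h.RM_iff (g i) (g j)
  notMem_InM i := h.notMem_InM (g i)
  RM_InM_iff i := h.RM_InM_iff (g i)

theorem eq_of_mem_InM (h : SimilarConfig t w w') {i : β} {n : ℕ} (hn : n < t)
    (hi : w i ∈ InM M n ∨ w' i ∈ InM M n) : w i = w' i := by
  by_contra hne
  have := h.notMem_InM i hne n hn
  tauto

theorem mem_InM_iff (h : SimilarConfig t w w') (i : β) {n : ℕ} (hn : n < t) :
    w i ∈ InM M n ↔ w' i ∈ InM M n := by
  constructor <;> intro hi
  · rwa [← h.eq_of_mem_InM hn (Or.inl hi)]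
  · rwa [h.eq_of_mem_InM hn (Or.inr hi)]

theorem mem_IM_iff (hM : IsTcasModel M) (h : SimilarConfig t w w') (i : β) :
    w i ∈ IM M ↔ w' i ∈ IM M := by
  rw [hM.mem_IM_iff, hM.mem_IM_iff, h.mem_PM_iff]

theorem disjoint_image_filter (h : SimilarConfig t w w') [Fintype β] {Q₀ Q₁ : β → Prop}
    [DecidablePred Q₀] [DecidablePred Q₁] (hQ : ∀ i j, w i = w j → Q₀ i → ¬ Q₁ j) :
    Disjoint ((Finset.univ.filter Q₀).image w') ((Finset.univ.filter Q₁).image w') := by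
  simp only [Finset.disjoint_left, Finset.mem_image, Finset.mem_filter, Finset.mem_univ,
    true_and]
  rintro _ ⟨i, hi, rfl⟩ ⟨j, hj, hij⟩
  exact hQ i j ((h.eq_iff i j).mpr hij.symm) hi hj

theorem option_elim' (hM : IsTcasModel M) (h : SimilarConfig t w w') {d d' : M}
    (hfresh : ∀ i, w i ≠ d ∧ w' i ≠ d') (hP : d ∈ PM M ↔ d' ∈ PM M)
    (hmoved : d ≠ d' → ∀ n < t, d ∉ InM M n ∧ d' ∉ InM M n)
    (hleft : ∀ i, RM M d (w i) ↔ RM M d' (w' i)) (hright : ∀ i, RM M (w i) d ↔ RM M (w' i) d')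
    (hnbr : d ≠ d' → ∀ n < t, ∀ e ∈ InM M n, (RM M d e ↔ RM M d' e)) :
    SimilarConfig t (Option.elim' d w) (Option.elim' d' w') where
  eq_iff
    | none, none => by simp
    | none, some j => iff_of_false (hfresh j).1.symm (hfresh j).2.symm
    | some i, none => iff_of_false (hfresh i).1 (hfresh i).2
    | some i, some j => h.eq_iff i j
  mem_PM_iff
    | none => hP
    | some i => h.mem_PM_iff i
  RM_iff
    | none, none => iff_of_false (hM.not_RM_self d) (hM.not_RM_self d')
    | none, some j => hleft j
    | some i, none => hright i
    | some i, some j => h.RM_iff i j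
  notMem_InM
    | none => hmoved
    | some i => h.notMem_InM i
  RM_InM_iff
    | none => hnbr
    | some i => h.RM_InM_iff i

theorem of_swap (hM : IsTcasModel M) {b b' : M} (hb : b ∈ IM M) (hb' : b' ∈ IM M)
    (hsmall : ∀ n < t, b ∉ InM M n ∧ b' ∉ InM M n)
    (hw : ∀ i, (w i = b ∧ w' i = b') ∨
      ∃ c, w i = c ∧ w' i = c ∧ c ≠ b ∧ c ≠ b' ∧ (RM M c b ↔ RM M c b')) :
    SimilarConfig t w w' := by
  constructor
  · intro i j
    rcases hw i with ⟨hi, hi'⟩ | ⟨c, hi, hi', hcb, hcb', -⟩ <;>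
      rcases hw j with ⟨hj, hj'⟩ | ⟨d, hj, hj', hdb, hdb', -⟩ <;> rw [hi, hi', hj, hj']
    · simp
    · exact iff_of_false (Ne.symm hdb) (Ne.symm hdb')
    · exact iff_of_false hcb hcb'
  · intro i
    rcases hw i with ⟨hi, hi'⟩ | ⟨c, hi, hi', -⟩ <;> rw [hi, hi']
    exact iff_of_false (hM.mem_IM_iff.mp hb) (hM.mem_IM_iff.mp hb')
  · intro i j
    rcases hw i with ⟨hi, hi'⟩ | ⟨c, hi, hi', -, -, hcR⟩ <;>
      rcases hw j with ⟨hj, hj'⟩ | ⟨d, hj, hj', -⟩ <;> rw [hi, hi', hj, hj']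
    · exact iff_of_false (hM.not_RM_of_mem_IM hb b) (hM.not_RM_of_mem_IM hb' b')
    · exact iff_of_false (hM.not_RM_of_mem_IM hb _) (hM.not_RM_of_mem_IM hb' _)
    · exact hcR
  · intro i hi n hn
    rcases hw i with ⟨hi, hi'⟩ | ⟨c, hc, hc', -⟩
    · rw [hi, hi']
      exact hsmall n hn
    · exact absurd (hc.trans hc'.symm) hi
  · intro i hi n hn e _
    rcases hw i with ⟨hi, hi'⟩ | ⟨c, hc, hc', -⟩
    · rw [hi, hi']
      exact iff_of_false (hM.not_RM_of_mem_IM hb e) (hM.not_RM_of_mem_IM hb' e)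
    · exact absurd (hc.trans hc'.symm) hi

variable (hM : IsTcasModel M) (h : SimilarConfig t w w')
include hM h

theorem exists_extend_of_mem_PM [Fintype β] (hcard : Fintype.card β ≤ t) {d : M}
    (hd : d ∈ PM M) (hfresh : ∀ i, w i ≠ d) :
    ∃ d', SimilarConfig t (Option.elim' d w) (Option.elim' d' w') := by
  -- `I`-points of the configuration outside every `I_n` with `n < t`, sorted by `R(d, ·)`;
  -- the points inside some such `I_n` are fixed and handled by copying `d`'s neighbours
  set Q := fun i => w i ∈ IM M ∧ ∀ n < t, w i ∉ InM M n
  set B₁ := (Finset.univ.filter fun i => Q i ∧ RM M d (w i)).image w'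
  set B₀ := (Finset.univ.filter fun i => Q i ∧ ¬ RM M d (w i)).image w'
  have hQ : ∀ b ∈ B₀ ∪ B₁, b ∈ IM M ∧ ∀ n < t, b ∉ InM M n := fun b hb => by
    obtain ⟨i, hi, rfl⟩ : ∃ i, Q i ∧ w' i = b := by
      simp only [B₀, B₁, Finset.mem_union, Finset.mem_image, Finset.mem_filter,
        Finset.mem_univ, true_and] at hb
      rcases hb with ⟨i, hi, rfl⟩ | ⟨i, hi, rfl⟩ <;> exact ⟨i, hi.1, rfl⟩
    exact ⟨(h.mem_IM_iff hM i).mp hi.1, fun n hn => (h.mem_InM_iff i hn).not.mp (hi.2 n hn)⟩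
  have hdisj : Disjoint B₀ B₁ :=
    h.disjoint_image_filter fun i j hij hi hj => hi.2 (by rw [hij]; exact hj.2)
  have hB₁ : B₁.card ≤ t :=
    Finset.card_image_le.trans ((Finset.card_filter_le _ _).trans (by simpa using hcard))
  obtain ⟨d', hd'P, hd'F, hd'₁, hd'₀, hd'nbr⟩ := hM.exists_PM_copy hd
    (fun b hb => (hQ b (Finset.mem_union_left _ hb)).1)
    (fun b hb => (hQ b (Finset.mem_union_right _ hb)).1) hdisj
    (fun b hb => (hQ b (Finset.mem_union_left _ hb)).2)
    (fun b hb => (hQ b (Finset.mem_union_right _ hb)).2) hB₁ (Finset.univ.image w')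
  have hleft : ∀ i, RM M d (w i) ↔ RM M d' (w' i) := fun i => by
    by_cases hi : Q i
    · by_cases hr : RM M d (w i)
      · exact iff_of_true hr (hd'₁ _ (Finset.mem_image_of_mem _ (by simp [hi, hr])))
      · exact iff_of_false hr (hd'₀ _ (Finset.mem_image_of_mem _ (by simp [hi, hr])))
    by_cases hI : w i ∈ IM M
    · obtain ⟨n, hn, hin⟩ : ∃ n < t, w i ∈ InM M n := by simpa [Q, hI] using hi
      rw [← h.eq_of_mem_InM hn (Or.inl hin), hd'nbr n hn _ hin]
    · exact iff_of_false (fun hr => hI (hM.R_sub _ _ hr).2)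
        (fun hr => (h.mem_IM_iff hM i).not.mp hI (hM.R_sub _ _ hr).2)
  exact ⟨d', h.option_elim' hM
    (fun i => ⟨hfresh i, fun he => hd'F (he ▸ Finset.mem_image_of_mem w' (Finset.mem_univ i))⟩)
    (iff_of_true hd hd'P)
    (fun _ n _ => ⟨hM.notMem_InM_of_mem_PM hd n, hM.notMem_InM_of_mem_PM hd'P n⟩) hleft
    (fun i => iff_of_false (hM.not_RM_of_mem_PM hd _) (hM.not_RM_of_mem_PM hd'P _))
    (fun _ n hn e he => (hd'nbr n hn e he).symm)⟩

theorem extend_of_mem_InM {d : M} (hfresh : ∀ i, w i ≠ d) {n₀ : ℕ} (hn₀ : n₀ < t)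
    (hd : d ∈ InM M n₀) : SimilarConfig t (Option.elim' d w) (Option.elim' d w') := by
  have hdP : d ∉ PM M := fun hP => hM.notMem_InM_of_mem_PM hP n₀ hd
  refine h.option_elim' hM (fun i => ⟨hfresh i, fun he => hfresh i ?_⟩) Iff.rfl
    (absurd rfl) (fun i => iff_of_false (fun hr => hdP (hM.R_sub _ _ hr).1)
      (fun hr => hdP (hM.R_sub _ _ hr).1)) (fun i => ?_) (absurd rfl)
  · rw [h.eq_of_mem_InM hn₀ (Or.inr (he ▸ hd)), he]
  · by_cases hi : w i = w' i
    · rw [hi]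
    · exact h.RM_InM_iff i hi n₀ hn₀ d hd

theorem exists_extend_of_notMem_InM [Fintype β] {d : M} (hfresh : ∀ i, w i ≠ d)
    (hd : d ∈ IM M) (hsmall : ∀ n < t, d ∉ InM M n) :
    ∃ d', SimilarConfig t (Option.elim' d w) (Option.elim' d' w') := by
  set A₁ := (Finset.univ.filter fun i => RM M (w i) d).image w'
  set A₀ := (Finset.univ.filter fun i => w i ∈ PM M ∧ ¬ RM M (w i) d).image w'
  have hA : ∀ a ∈ A₀ ∪ A₁, a ∈ PM M := fun a ha => by
    simp only [A₀, A₁, Finset.mem_union, Finset.mem_image, Finset.mem_filter,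
      Finset.mem_univ, true_and] at ha
    rcases ha with ⟨i, hi, rfl⟩ | ⟨i, hi, rfl⟩
    · exact (h.mem_PM_iff i).mp hi.1
    · exact (h.mem_PM_iff i).mp (hM.R_sub _ _ hi).1
  have hdisj : Disjoint A₀ A₁ :=
    h.disjoint_image_filter fun i j hij hi hj => hi.2 (by rw [hij]; exact hj)
  obtain ⟨d', hd'I, hd'small, hd'F, hd'₁, hd'₀⟩ := hM.exists_IM_avoiding
    (fun a ha => hA a (Finset.mem_union_left _ ha))
    (fun a ha => hA a (Finset.mem_union_right _ ha)) hdisj t (Finset.univ.image w')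
  have hright : ∀ i, RM M (w i) d ↔ RM M (w' i) d' := fun i => by
    by_cases hr : RM M (w i) d
    · exact iff_of_true hr (hd'₁ _ (Finset.mem_image_of_mem _ (by simp [hr])))
    by_cases hiP : w i ∈ PM M
    · exact iff_of_false hr (hd'₀ _ (Finset.mem_image_of_mem _ (by simp [hiP, hr])))
    · exact iff_of_false hr (fun hr' => hiP ((h.mem_PM_iff i).mpr (hM.R_sub _ _ hr').1))
  exact ⟨d', h.option_elim' hM
    (fun i => ⟨hfresh i, fun he => hd'F (he ▸ Finset.mem_image_of_mem w' (Finset.mem_univ i))⟩)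
    (iff_of_false (hM.mem_IM_iff.mp hd) (hM.mem_IM_iff.mp hd'I))
    (fun _ n hn => ⟨hsmall n hn, hd'small n hn⟩)
    (fun i => iff_of_false (hM.not_RM_of_mem_IM hd _) (hM.not_RM_of_mem_IM hd'I _)) hright
    (fun _ n _ e _ => iff_of_false (hM.not_RM_of_mem_IM hd e) (hM.not_RM_of_mem_IM hd'I e))⟩

theorem exists_extend [Fintype β] (hcard : Fintype.card β ≤ t) (d : M) :
    ∃ d', SimilarConfig t (Option.elim' d w) (Option.elim' d' w') := by
  by_cases hold : ∃ j, w j = d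
  · obtain ⟨j, rfl⟩ := hold
    refine ⟨w' j, ?_⟩
    convert h.comp (Option.elim' j id) using 1 <;> funext o <;> cases o <;> rfl
  push Not at hold
  by_cases hP : d ∈ PM M
  · exact h.exists_extend_of_mem_PM hM hcard hP hold
  by_cases hsmall : ∃ n < t, d ∈ InM M n
  · obtain ⟨n, hn, hd⟩ := hsmall
    exact ⟨d, h.extend_of_mem_InM hM hold hn hd⟩
  push Not at hsmall
  exact h.exists_extend_of_notMem_InM hM hold (hM.mem_IM_iff.mpr hP) hsmall

end SimilarConfig

end

namespace Lcas

def relRank : {l : ℕ} → Lcas.Relations l → ℕ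
  | 1, CasRel1.In k => k + 1
  | _, _ => 0

/-- A single budget for the quantifier depth and for the indices `n` of the `I_n` occurring. -/
def rank {α : Type*} : {n : ℕ} → Lcas.BoundedFormula α n → ℕ
  | _, .falsum => 0
  | _, .equal _ _ => 0
  | _, .rel R _ => relRank R
  | _, .imp f g => max (rank f) (rank g)
  | _, .all f => rank f + 1

theorem term_eq_var {γ : Type*} (τ : Lcas.Term γ) : ∃ g, τ = Term.var g := by
  cases τ with
  | var g => exact ⟨g, rfl⟩
  | func f _ => exact (f : Empty).elim

end Lcas

def snocIndex {α : Type*} {n : ℕ} : α ⊕ Fin (n + 1) → Option (α ⊕ Fin n) :=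
  Sum.elim (some ∘ Sum.inl) (Fin.lastCases none (some ∘ Sum.inr))

theorem sum_elim_snoc {α M : Type*} {n : ℕ} (v : α → M) (xs : Fin n → M) (d : M) :
    Sum.elim v (Fin.snoc xs d) = Option.elim' d (Sum.elim v xs) ∘ snocIndex := by
  funext i
  rcases i with a | i
  · rfl
  · induction i using Fin.lastCases <;> simp [snocIndex]

namespace SimilarConfig

variable {M : Type u} [Lcas.Structure M] {t : ℕ} (hM : IsTcasModel M)
include hM

theorem relMap_iff {β : Type*} {w w' : β → M} (h : SimilarConfig t w w') {l : ℕ}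
    (R : Lcas.Relations l) (hR : Lcas.relRank R ≤ t) (g : Fin l → β) :
    Structure.RelMap R (w ∘ g) ↔ Structure.RelMap R (w' ∘ g) := by
  match l, R with
  | 0, R => exact (R : Empty).elim
  | 1, R =>
    have hw : ∀ u : β → M, u ∘ g = ![u (g 0)] := fun u => by
      funext i; fin_cases i; rfl
    rw [hw, hw]
    match R with
    | CasRel1.P => exact h.mem_PM_iff (g 0)
    | CasRel1.I => exact h.mem_IM_iff hM (g 0)
    | CasRel1.In k => exact h.mem_InM_iff (g 0) (Nat.lt_of_succ_le hR)
  | 2, R =>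
    have hw : ∀ u : β → M, u ∘ g = ![u (g 0), u (g 1)] := fun u => by
      funext i; fin_cases i <;> rfl
    rw [hw, hw]
    exact h.RM_iff (g 0) (g 1)
  | _ + 3, R => exact (R : Empty).elim

theorem realize_iff {α : Type*} [Fintype α] {v v' : α → M} : ∀ {n : ℕ}
    (ψ : Lcas.BoundedFormula α n) {xs xs' : Fin n → M},
    Fintype.card α + n + Lcas.rank ψ ≤ t → SimilarConfig t (Sum.elim v xs) (Sum.elim v' xs') →
    (ψ.Realize v xs ↔ ψ.Realize v' xs')
  | _, .falsum, _, _, _, _ => Iff.rfl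
  | _, .equal τ₁ τ₂, _, _, _, h => by
    obtain ⟨g₁, rfl⟩ := Lcas.term_eq_var τ₁
    obtain ⟨g₂, rfl⟩ := Lcas.term_eq_var τ₂
    exact h.eq_iff g₁ g₂
  | _, .rel R ts, _, _, hsize, h => by
    choose g hg using fun i => Lcas.term_eq_var (ts i)
    obtain rfl : ts = fun i => Term.var (g i) := funext hg
    exact h.relMap_iff hM R (le_of_add_le_right hsize) g
  | _, .imp ψ₁ ψ₂, _, _, hsize, h => by
    have h₁ := realize_iff ψ₁ (le_trans (by simp [Lcas.rank]) hsize) h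
    have h₂ := realize_iff ψ₂ (le_trans (by simp [Lcas.rank]) hsize) h
    simp only [BoundedFormula.realize_imp, h₁, h₂]
  | n, .all θ, xs, xs', hsize, h => by
    have hcard : Fintype.card (α ⊕ Fin n) ≤ t := by
      simp only [Lcas.rank] at hsize
      simp only [Fintype.card_sum, Fintype.card_fin]
      omega
    have step : ∀ d d', SimilarConfig t (Option.elim' d (Sum.elim v xs))
        (Option.elim' d' (Sum.elim v' xs')) →
        (θ.Realize v (Fin.snoc xs d) ↔ θ.Realize v' (Fin.snoc xs' d')) := fun d d' hd =>
      realize_iff θ (by simp only [Lcas.rank] at hsize; omega)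
        (by rw [sum_elim_snoc, sum_elim_snoc]; exact hd.comp snocIndex)
    simp only [BoundedFormula.realize_all]
    constructor
    · intro H d'
      obtain ⟨d, hd⟩ := h.symm.exists_extend hM hcard d'
      exact (step d d' hd.symm).mp (H d)
    · intro H d
      obtain ⟨d', hd⟩ := h.exists_extend hM hcard d
      exact (step d d' hd).mpr (H d')

end SimilarConfig


section Generic

variable {M : Type u} [Lcas.Structure M]

def IsGeneric (A : Set M) (t : ℕ) (C : Finset M) (b : M) : Prop :=
  b ∈ IM M ∧ (∀ n < t, b ∉ InM M n) ∧ ∀ c ∈ C, b ≠ c ∧ (RM M c b ↔ c ∈ A)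

theorem IsTcasModel.exists_isGeneric (hM : IsTcasModel M) {A : Set M} (hA : A ⊆ PM M)
    (t : ℕ) (C : Finset M) : ∃ b, IsGeneric A t C b := by
  obtain ⟨b, hbI, hbt, hbC, hb₁, hb₀⟩ := hM.exists_IM_avoiding
    (A₀ := C.filter fun c => c ∈ PM M ∧ c ∉ A) (A₁ := C.filter (· ∈ A))
    (fun c hc => (Finset.mem_filter.mp hc).2.1) (fun c hc => hA (Finset.mem_filter.mp hc).2)
    (Finset.disjoint_filter.mpr fun _ _ hc => hc.2) t C
  refine ⟨b, hbI, hbt, fun c hc => ⟨fun h => hbC (h ▸ hc), ?_⟩⟩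
  by_cases hcA : c ∈ A
  · exact iff_of_true (hb₁ c (Finset.mem_filter.mpr ⟨hc, hcA⟩)) hcA
  by_cases hcP : c ∈ PM M
  · exact iff_of_false (hb₀ c (Finset.mem_filter.mpr ⟨hc, hcP, hcA⟩)) hcA
  · exact iff_of_false (fun hr => hcP (hM.R_sub c b hr).1) hcA

theorem IsGeneric.realizesAt {A : Set M} {t : ℕ} {C : Finset M} {b : M}
    (hb : IsGeneric A t C b) {χ : Lcas.Formula (M ⊕ Fin 1)} (hχ : χ ∈ typeA A)
    (ht : Lcas.rank χ ≤ t) (hC : χ.freeVarFinset.toLeft ⊆ C) : RealizesAt M χ b := by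
  obtain ⟨hbI, hbt, hbC⟩ := hb
  have hpar : ∀ c, Sum.inl c ∈ χ.freeVarFinset → b ≠ c ∧ (RM M c b ↔ c ∈ A) := fun c hc =>
    hbC c (hC (Finset.mem_toLeft.mpr hc))
  rcases hχ with ((((rfl | ⟨n, rfl⟩) | ⟨c, -, rfl⟩) | ⟨a, ha, rfl⟩) | ⟨a, ha, rfl⟩)
  · simpa using hbI
  · simpa using hbt n ht
  · exact realizesAt_fNe.mpr (hpar c (inl_mem_freeVarFinset_fNe c)).1
  · exact realizesAt_fRleft.mpr ((hpar a (inl_mem_freeVarFinset_fRleft a)).2.mpr ha)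
  · exact realizesAt_not.mpr fun hr =>
      ha.2 ((hpar a (inl_mem_freeVarFinset_fRleft a)).2.mp (realizesAt_fRleft.mp hr))

noncomputable def genericFormulas (A : Set M) (t : ℕ) (C : Finset M) :
    Finset (Lcas.Formula (M ⊕ Fin 1)) :=
  insert (fI M) ((Finset.range t).image (fun n => (fIn M n).not) ∪
    C.image fun c => if c ∈ IM M then fNe c else if c ∈ A then fRleft c else (fRleft c).not)

variable (hM : IsTcasModel M) {A : Set M} (hA : A ⊆ PM M)
include hM hA

omit hA in
theorem genericFormulas_subset_typeA (t : ℕ) (C : Finset M) :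
    ↑(genericFormulas A t C) ⊆ typeA A := by
  obtain ⟨hI, hIn, hNe, hR, hnR⟩ := typeA_subset_iff.mp (subset_refl (typeA A))
  intro χ hχ
  simp only [genericFormulas, Finset.coe_insert, Finset.coe_union, Finset.coe_image,
    Set.mem_insert_iff, Set.mem_union, Set.mem_image, Finset.mem_coe] at hχ
  rcases hχ with rfl | ⟨n, -, rfl⟩ | ⟨c, -, rfl⟩
  · exact hI
  · exact hIn n
  · split_ifs with hcI hcA
    exacts [hNe c hcI, hR c hcA, hnR c ⟨(hM.part c).mpr hcI, hcA⟩]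

theorem isGeneric_of_realizesAt {t : ℕ} {C : Finset M} {b : M}
    (hb : ∀ χ ∈ genericFormulas A t C, RealizesAt M χ b) : IsGeneric A t C b := by
  have hbI : b ∈ IM M := by simpa using hb (fI M) (Finset.mem_insert_self _ _)
  refine ⟨hbI, fun n hn => ?_, fun c hc => ?_⟩
  · simpa using hb _ (Finset.mem_insert_of_mem (Finset.mem_union_left _
      (Finset.mem_image_of_mem _ (Finset.mem_range.mpr hn))))
  have hbc := hb _ (Finset.mem_insert_of_mem (Finset.mem_union_right _
    (Finset.mem_image_of_mem _ hc)))
  split_ifs at hbc with hcI hcA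
  · have hcP : c ∉ PM M := hM.mem_IM_iff.mp hcI
    exact ⟨realizesAt_fNe.mp hbc, iff_of_false (fun hr => hcP (hM.R_sub c b hr).1)
      (fun hcA => hcP (hA hcA))⟩
  · exact ⟨fun h => hcI (h ▸ hbI), iff_of_true (realizesAt_fRleft.mp hbc) hcA⟩
  · exact ⟨fun h => hcI (h ▸ hbI), iff_of_false (by simpa using hbc) hcA⟩

omit hA in
theorem realizesAt_iff_of_isGeneric (φ : Lcas.Formula (M ⊕ Fin 1)) {t : ℕ} {C : Finset M}
    (hC : φ.freeVarFinset.toLeft ⊆ C)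
    (ht : φ.freeVarFinset.card + Lcas.rank (φ.restrictFreeVar id) ≤ t) {b b' : M}
    (hb : IsGeneric A t C b) (hb' : IsGeneric A t C b') :
    RealizesAt M φ b ↔ RealizesAt M φ b' := by
  have hrestrict : ∀ b, RealizesAt M φ b ↔
      (φ.restrictFreeVar id).Realize (fun x => Sum.elim id (fun _ => b) x.1) default := fun b =>
    (BoundedFormula.realize_restrictFreeVar (f := id) _ fun _ => rfl).symm
  rw [hrestrict, hrestrict]
  refine SimilarConfig.realize_iff hM _ (by simpa using ht) (SimilarConfig.of_swap hM hb.1 hb'.1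
    (fun n hn => ⟨hb.2.1 n hn, hb'.2.1 n hn⟩) ?_)
  rintro (⟨c | x, hc⟩ | i)
  · obtain ⟨hbc, hcb⟩ := hb.2.2 c (hC (Finset.mem_toLeft.mpr hc))
    obtain ⟨hb'c, hcb'⟩ := hb'.2.2 c (hC (Finset.mem_toLeft.mpr hc))
    exact Or.inr ⟨c, rfl, rfl, Ne.symm hbc, Ne.symm hb'c, hcb.trans hcb'.symm⟩
  · exact Or.inl ⟨rfl, rfl⟩
  · exact i.elim0

end Generic

section Types

variable {M : Type u} [Lcas.Structure M] {p q : Set (Lcas.Formula (M ⊕ Fin 1))}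

def entailed (p : Set (Lcas.Formula (M ⊕ Fin 1))) : Set (Lcas.Formula (M ⊕ Fin 1)) :=
  {φ | ∃ s : Finset (Lcas.Formula (M ⊕ Fin 1)), ↑s ⊆ p ∧
    ∀ a, (∀ χ ∈ s, RealizesAt M χ a) → RealizesAt M φ a}

def DeterminesType (p : Set (Lcas.Formula (M ⊕ Fin 1))) : Prop :=
  ∀ φ, ∃ s : Finset (Lcas.Formula (M ⊕ Fin 1)), ↑s ⊆ p ∧ ∀ a b,
    (∀ χ ∈ s, RealizesAt M χ a) → (∀ χ ∈ s, RealizesAt M χ b) →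
      (RealizesAt M φ a ↔ RealizesAt M φ b)

theorem subset_entailed (p : Set (Lcas.Formula (M ⊕ Fin 1))) : p ⊆ entailed p := fun φ hφ =>
  ⟨{φ}, by simpa using hφ, fun _ ha => ha φ (Finset.mem_singleton_self φ)⟩

theorem FinSatIn.entailed (hp : FinSatIn M p) : FinSatIn M (entailed p) := by
  intro s hs
  choose! u hup hu using fun φ (hφ : φ ∈ s) => hs hφ
  obtain ⟨a, ha⟩ := hp (s.biUnion u) (by simpa using hup)
  exact ⟨a, fun φ hφ => hu φ hφ a fun χ hχ => ha χ (Finset.mem_biUnion.mpr ⟨φ, hφ, hχ⟩)⟩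

theorem FinSatIn.notMem_not (hq : FinSatIn M q) {φ : Lcas.Formula (M ⊕ Fin 1)} (hφ : φ ∈ q) :
    φ.not ∉ q := fun hnφ => by
  obtain ⟨a, ha⟩ := hq {φ, φ.not} (by simp [Set.insert_subset_iff, hφ, hnφ])
  exact realizesAt_not.mp (ha φ.not (by simp)) (ha φ (by simp))

theorem DeterminesType.subset_entailed_of_subset (hdet : DeterminesType p) (hq : FinSatIn M q)
    (hpq : p ⊆ q) : q ⊆ entailed p := fun φ hφ => by
  obtain ⟨s, hs, hdec⟩ := hdet φ
  obtain ⟨b, hb⟩ := hq (insert φ s) (by simpa [Set.insert_subset_iff] using ⟨hφ, hs.trans hpq⟩)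
  exact ⟨s, hs, fun a ha => (hdec a b ha fun χ hχ => hb χ (Finset.mem_insert_of_mem hχ)).mpr
    (hb φ (Finset.mem_insert_self φ s))⟩

theorem DeterminesType.existsUnique_isCompleteTypeOver (hdet : DeterminesType p)
    (hp : FinSatIn M p) : ∃! q, IsCompleteTypeOver M q ∧ p ⊆ q := by
  refine ⟨entailed p, ⟨⟨hp.entailed, fun q hq hsub => ?_⟩, subset_entailed p⟩, ?_⟩
  · exact (hdet.subset_entailed_of_subset hq ((subset_entailed p).trans hsub)).antisymm hsub
  · rintro q ⟨hq, hpq⟩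
    exact (hq.2 _ hp.entailed (hdet.subset_entailed_of_subset hq.1 hpq)).symm

theorem IsCompleteTypeOver.entailed_subset (hq : IsCompleteTypeOver M q) : entailed q ⊆ q :=
  (hq.2 _ hq.1.entailed (subset_entailed q)).le

theorem IsCompleteTypeOver.mem_or_mem_not (hq : IsCompleteTypeOver M q)
    (φ : Lcas.Formula (M ⊕ Fin 1)) : φ ∈ q ∨ φ.not ∈ q := by
  refine or_iff_not_imp_left.mpr fun hφ => hq.entailed_subset ?_
  -- by maximality `insert φ q` has a finite part `s` without realization in `M`
  obtain ⟨s, hs, hunsat⟩ : ∃ s : Finset _, ↑s ⊆ insert φ q ∧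
      ∀ a, ∃ χ ∈ s, ¬ RealizesAt M χ a := by
    by_contra! h
    exact hφ (hq.2 _ h (Set.subset_insert φ q) ▸ Set.mem_insert φ q)
  refine ⟨s.erase φ, fun χ hχ => ?_, fun a ha => realizesAt_not.mpr fun hφa => ?_⟩
  · obtain ⟨hne, hχs⟩ := Finset.mem_erase.mp hχ
    exact (hs hχs).resolve_left hne
  · obtain ⟨χ, hχ, hnot⟩ := hunsat a
    by_cases e : χ = φ
    · exact hnot (e ▸ hφa)
    · exact hnot (ha χ (Finset.mem_erase.mpr ⟨e, hχ⟩))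

theorem IsCompleteTypeOver.fNe_mem (hq : IsCompleteTypeOver M q) (hI : fI M ∈ q) {c : M}
    (hc : c ∉ IM M) : fNe c ∈ q :=
  hq.entailed_subset ⟨{fI M}, by simpa using hI, fun _ ha => realizesAt_fNe.mpr fun h =>
    hc (h ▸ realizesAt_fI.mp (ha _ (Finset.mem_singleton_self _)))⟩

theorem IsCompleteTypeOver.isNonalgebraic_of_typeA_subset (hq : IsCompleteTypeOver M q)
    {A : Set M} (hsub : typeA A ⊆ q) : IsNonalgebraic M q := fun c => by
  obtain ⟨hI, -, hNe, -, -⟩ := typeA_subset_iff.mp hsub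
  by_cases hc : c ∈ IM M
  exacts [hNe c hc, hq.fNe_mem hI hc]

theorem IsCompleteTypeOver.existsUnique_typeA_subset (hq : IsCompleteTypeOver M q)
    (hnonalg : IsNonalgebraic M q) (hI : fI M ∈ q) (hIn : ∀ n, (fIn M n).not ∈ q) :
    ∃! A : Set M, A ⊆ PM M ∧ typeA A ⊆ q := by
  refine ⟨{a | a ∈ PM M ∧ fRleft a ∈ q}, ⟨fun a ha => ha.1, typeA_subset_iff.mpr
    ⟨hI, hIn, fun b _ => hnonalg b, fun a ha => ha.2, fun a ha =>
      (hq.mem_or_mem_not _).resolve_left fun h => ha.2 ⟨ha.1, h⟩⟩⟩, ?_⟩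
  rintro A ⟨hAP, hAq⟩
  obtain ⟨-, -, -, hR, hnR⟩ := typeA_subset_iff.mp hAq
  ext a
  exact ⟨fun ha => ⟨hAP ha, hR a ha⟩,
    fun ⟨haP, haq⟩ => by_contra fun ha => hq.1.notMem_not haq (hnR a ⟨haP, ha⟩)⟩

end Types

namespace IsTcasModel

variable {M : Type u} [Lcas.Structure M] (hM : IsTcasModel M) {A : Set M} (hA : A ⊆ PM M)
include hM hA

theorem finSatIn_typeA : FinSatIn M (typeA A) := fun s hs => by
  obtain ⟨b, hb⟩ := hM.exists_isGeneric hA (s.sup Lcas.rank)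
    (s.biUnion fun χ => χ.freeVarFinset).toLeft
  exact ⟨b, fun χ hχ => hb.realizesAt (hs hχ) (Finset.le_sup hχ) fun c hc =>
    Finset.mem_toLeft.mpr (Finset.mem_biUnion.mpr ⟨χ, hχ, Finset.mem_toLeft.mp hc⟩)⟩

theorem determinesType_typeA : DeterminesType (typeA A) := fun φ => by
  set t := φ.freeVarFinset.card + Lcas.rank (φ.restrictFreeVar id)
  refine ⟨genericFormulas A t φ.freeVarFinset.toLeft, genericFormulas_subset_typeA hM t _,
    fun b b' hb hb' => ?_⟩
  exact realizesAt_iff_of_isGeneric hM φ subset_rfl le_rfl (isGeneric_of_realizesAt hM hA hb)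
    (isGeneric_of_realizesAt hM hA hb')

end IsTcasModel

/-- for each `A ⊆ P^M`, `p_A` is finitely satisfiable in `M` and has a unique
extension to a complete 1-type over `M`, which is nonalgebraic; and every nonalgebraic
complete 1-type over `M` containing `I(x)` and all `¬I_n(x)` arises this way from a
unique `A ⊆ P^M`. -/
theorem stmt7 (M : Type u) [Lcas.Structure M] (hM : IsTcasModel M) :
    (∀ A : Set M, A ⊆ PM M →
      FinSatIn M (typeA A) ∧
      (∃! q : Set (Lcas.Formula (M ⊕ Fin 1)), IsCompleteTypeOver M q ∧ typeA A ⊆ q) ∧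
      (∀ q : Set (Lcas.Formula (M ⊕ Fin 1)), IsCompleteTypeOver M q → typeA A ⊆ q →
        IsNonalgebraic M q)) ∧
    ∀ q : Set (Lcas.Formula (M ⊕ Fin 1)), IsCompleteTypeOver M q → IsNonalgebraic M q →
      fI M ∈ q → (∀ n : ℕ, (fIn M n).not ∈ q) →
      ∃! A : Set M, A ⊆ PM M ∧ typeA A ⊆ q := by
  refine ⟨fun A hA => ⟨hM.finSatIn_typeA hA, ?_, fun q hq hsub => ?_⟩,
    fun q hq hnonalg hI hIn => hq.existsUnique_typeA_subset hnonalg hI hIn⟩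
  · exact (hM.determinesType_typeA hA).existsUnique_isCompleteTypeOver (hM.finSatIn_typeA hA)
  · exact hq.isNonalgebraic_of_typeA_subset hsub
end
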